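/- arXiv:1107.2998 — 5 statements merged into one kernel-verified Lean document; each statement's English description precedes it below -/
import Mathlib

section
/- For g(x) = exp(x_1 H_1 + x_2 H_2 + ... + x_N H_N), one has the explicit formula g(x) = I + (e^{x_1}-1)H_1 + (e^{x_N}-1)H_N + Σ_{i=2}^{m} x_i e^{x_1} E_{i,1} + Σ_{j=m+1}^{N-1} x_j e^{x_N} E_{j,N}. -/
open scoped BigOperators Nat

/-- The `N × N` real matrix unit `E i j` (1-based indices). -/
def E (N : ℕ) (i j : ℕ) : Matrix (Fin N) (Fin N) ℝ :=
  Matrix.of fun a b => if a.val + 1 = i ∧ b.val + 1 = j then 1 else 0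

/-- The generators `H_1, …, H_N` of the commutative subalgebra `h^{(m,N)}`. -/
def H (N m : ℕ) (i : ℕ) : Matrix (Fin N) (Fin N) ℝ :=
  if i = 1 then ∑ k ∈ Finset.Icc 1 m, E N k k
  else if i ≤ m then E N i 1
  else if i ≤ N - 1 then E N i N
  else ∑ k ∈ Finset.Icc (m + 1) N, E N k k

open NormedSpace in
lemma exp_smul_idem_aux {𝔸 : Type*} [NormedRing 𝔸] [NormedAlgebra ℝ 𝔸] [CompleteSpace 𝔸]
    (P : 𝔸) (hP : P * P = P) (c : ℝ) :
    exp (c • P) = 1 + (Real.exp c - 1) • P := by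
  have hpow : ∀ n : ℕ, P ^ (n + 1) = P := by
    intro n
    induction n with
    | zero => simp
    | succ k ih => rw [pow_succ, ih, hP]
  have hs : Summable fun n : ℕ => ((n ! : ℝ))⁻¹ • (c • P) ^ n := expSeries_summable' (c • P)
  have hsum1 : Summable fun n : ℕ => c ^ n / (n ! : ℝ) := Real.summable_pow_div_factorial c
  have hsum2 : Summable fun n : ℕ => c ^ (n + 1) / ((n + 1)! : ℝ) :=
    (summable_nat_add_iff 1).mpr hsum1
  have key : ∀ n : ℕ, (((n + 1)! : ℝ))⁻¹ • (c • P) ^ (n + 1)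
      = (c ^ (n + 1) / ((n + 1)! : ℝ)) • P := by
    intro n
    rw [smul_pow, hpow, smul_smul, div_eq_inv_mul, mul_comm]
  have : exp (c • P) = ∑' n : ℕ, ((n ! : ℝ))⁻¹ • (c • P) ^ n := by
    rw [exp_eq_tsum ℝ]
  rw [this, ← Summable.sum_add_tsum_nat_add 1 hs]
  have h0 : ∑ n ∈ Finset.range 1, ((n ! : ℝ))⁻¹ • (c • P) ^ n = 1 := by simp
  rw [h0]
  simp_rw [key]
  rw [Summable.tsum_smul_const hsum2]
  have hexp : Real.exp c = 1 + ∑' n : ℕ, c ^ (n + 1) / ((n + 1)! : ℝ) := by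
    have h : exp c = ∑' n : ℕ, c ^ n / (n ! : ℝ) := by rw [exp_eq_tsum_div]
    rw [Real.exp_eq_exp_ℝ, h, ← Summable.sum_add_tsum_nat_add 1 hsum1]
    simp
  rw [hexp]
  module

open NormedSpace in
lemma exp_sq_zero_aux {𝔸 : Type*} [NormedRing 𝔸] [NormedAlgebra ℝ 𝔸] [CompleteSpace 𝔸]
    (K : 𝔸) (hK : K * K = 0) : exp K = 1 + K := by
  have hpow : ∀ n : ℕ, K ^ (n + 2) = 0 := by
    intro n
    rw [pow_add, pow_two, hK, mul_zero]
  have hs : Summable fun n : ℕ => ((n ! : ℝ))⁻¹ • K ^ n := expSeries_summable' K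
  have : exp K = ∑' n : ℕ, ((n ! : ℝ))⁻¹ • K ^ n := by rw [exp_eq_tsum ℝ]
  rw [this, ← Summable.sum_add_tsum_nat_add 2 hs]
  have h2 : ∀ n : ℕ, (((n + 2)! : ℝ))⁻¹ • K ^ (n + 2) = 0 := by
    intro n; rw [hpow, smul_zero]
  simp_rw [h2, tsum_zero, add_zero]
  rw [Finset.sum_range_succ, Finset.sum_range_one]
  norm_num

lemma Matrix.exp_smul_idem {n : ℕ} (P : Matrix (Fin n) (Fin n) ℝ) (hP : P * P = P) (c : ℝ) :
    NormedSpace.exp (c • P) = 1 + (Real.exp c - 1) • P := by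
  letI : SeminormedRing (Matrix (Fin n) (Fin n) ℝ) := Matrix.linftyOpSemiNormedRing
  letI : NormedRing (Matrix (Fin n) (Fin n) ℝ) := Matrix.linftyOpNormedRing
  letI : NormedAlgebra ℝ (Matrix (Fin n) (Fin n) ℝ) := Matrix.linftyOpNormedAlgebra
  exact exp_smul_idem_aux P hP c

lemma Matrix.exp_sq_zero {n : ℕ} (K : Matrix (Fin n) (Fin n) ℝ) (hK : K * K = 0) :
    NormedSpace.exp K = 1 + K := by
  letI : SeminormedRing (Matrix (Fin n) (Fin n) ℝ) := Matrix.linftyOpSemiNormedRing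
  letI : NormedRing (Matrix (Fin n) (Fin n) ℝ) := Matrix.linftyOpNormedRing
  letI : NormedAlgebra ℝ (Matrix (Fin n) (Fin n) ℝ) := Matrix.linftyOpNormedAlgebra
  exact exp_sq_zero_aux K hK

lemma E_mul_same (N i j l : ℕ) (hj1 : 1 ≤ j) (hjN : j ≤ N) :
    E N i j * E N j l = E N i l := by
  ext a b
  simp only [Matrix.mul_apply, E, Matrix.of_apply]
  rw [Finset.sum_eq_single (⟨j - 1, by omega⟩ : Fin N)]
  · have hj : (j - 1) + 1 = j := by omega
    by_cases h1 : a.val + 1 = i <;> by_cases h2 : b.val + 1 = l <;> simp [h1, h2, hj]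
  · intro c _ hc
    have : ¬ (c.val + 1 = j) := by
      intro h
      apply hc
      apply Fin.ext
      simp only
      omega
    simp [this]
  · simp

lemma E_mul_ne (N i j k l : ℕ) (hjk : j ≠ k) : E N i j * E N k l = 0 := by
  ext a b
  simp only [Matrix.mul_apply, E, Matrix.of_apply, Matrix.zero_apply]
  apply Finset.sum_eq_zero
  intro c _
  by_cases h : c.val + 1 = j
  · have : ¬ (c.val + 1 = k) := by omega
    simp [this]
  · simp [h]

lemma sumdiag_mul (N a b i l : ℕ) (h1 : 1 ≤ i) (hiN : i ≤ N) :
    (∑ k ∈ Finset.Icc a b, E N k k) * E N i l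
      = if i ∈ Finset.Icc a b then E N i l else 0 := by
  rw [Finset.sum_mul]
  by_cases hi : i ∈ Finset.Icc a b
  · rw [Finset.sum_eq_single i]
    · rw [E_mul_same N i i l h1 hiN, if_pos hi]
    · intro k _ hk; exact E_mul_ne N k k i l hk
    · intro h; exact absurd hi h
  · rw [if_neg hi]
    apply Finset.sum_eq_zero
    intro k hk
    exact E_mul_ne N k k i l (by rintro rfl; exact hi hk)

lemma mul_sumdiag (N a b i j : ℕ) (h1 : 1 ≤ j) (hjN : j ≤ N) :
    E N i j * (∑ k ∈ Finset.Icc a b, E N k k)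
      = if j ∈ Finset.Icc a b then E N i j else 0 := by
  rw [Finset.mul_sum]
  by_cases hj : j ∈ Finset.Icc a b
  · rw [Finset.sum_eq_single j]
    · rw [E_mul_same N i j j h1 hjN, if_pos hj]
    · intro k _ hk; exact E_mul_ne N i j k k (Ne.symm hk)
    · intro h; exact absurd hj h
  · rw [if_neg hj]
    apply Finset.sum_eq_zero
    intro k hk
    exact E_mul_ne N i j k k (by rintro rfl; exact hj hk)

lemma expand_aux {A : Type*} [Ring A] [Algebra ℝ A] (P Q K₁ K₂ : A) (a b : ℝ)
    (hPQ : P*Q = 0) (hPK₁ : P*K₁ = K₁) (hPK₂ : P*K₂ = 0) (hQK₁ : Q*K₁ = 0)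
    (hQK₂ : Q*K₂ = K₂) :
    (1 + (Real.exp a - 1) • P) * (1 + (Real.exp b - 1) • Q) * (1 + (K₁ + K₂))
      = 1 + (Real.exp a - 1) • P + (Real.exp b - 1) • Q
        + Real.exp a • K₁ + Real.exp b • K₂ := by
  simp only [mul_add, add_mul, mul_one, one_mul, smul_mul_assoc, mul_smul_comm,
    hPQ, hPK₁, hPK₂, hQK₁, hQK₂, smul_zero, zero_mul, mul_zero, zero_add, add_zero, smul_smul]
  module

theorem exp_H_formula (N m : ℕ) (hN : 2 ≤ N) (hm1 : 2 ≤ m) (hm2 : m ≤ N - 2)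
    (x : ℕ → ℝ) :
    NormedSpace.exp (∑ i ∈ Finset.Icc 1 N, x i • H N m i) =
      1 + (Real.exp (x 1) - 1) • H N m 1 + (Real.exp (x N) - 1) • H N m N
        + ∑ i ∈ Finset.Icc 2 m, (x i * Real.exp (x 1)) • E N i 1
        + ∑ j ∈ Finset.Icc (m + 1) (N - 1), (x j * Real.exp (x N)) • E N j N := by
  have hmN : m ≤ N := by omega
  have hm1N : m + 1 ≤ N := by omega
  set P : Matrix (Fin N) (Fin N) ℝ := ∑ k ∈ Finset.Icc 1 m, E N k k with hPdef
  set Q : Matrix (Fin N) (Fin N) ℝ := ∑ k ∈ Finset.Icc (m + 1) N, E N k k with hQdef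
  set K₁ : Matrix (Fin N) (Fin N) ℝ := ∑ i ∈ Finset.Icc 2 m, x i • E N i 1 with hK1def
  set K₂ : Matrix (Fin N) (Fin N) ℝ := ∑ j ∈ Finset.Icc (m + 1) (N - 1), x j • E N j N
    with hK2def
  -- values of H
  have hH1 : H N m 1 = P := by simp [H, hPdef]
  have hHN : H N m N = Q := by
    have h1 : ¬ (N = 1) := by omega
    have h2 : ¬ (N ≤ m) := by omega
    have h3 : ¬ (N ≤ N - 1) := by omega
    simp [H, h1, h2, h3, hQdef]
  -- split the sum
  have hsplit : ∑ i ∈ Finset.Icc 1 N, x i • H N m i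
      = x 1 • P + x N • Q + (K₁ + K₂) := by
    have e1 : Finset.Icc 1 N = Finset.Ioc 0 N := by ext k; simp only [Finset.mem_Icc, Finset.mem_Ioc]; omega
    have e2 : Finset.Icc 2 m = Finset.Ioc 1 m := by ext k; simp only [Finset.mem_Icc, Finset.mem_Ioc]; omega
    have e3 : Finset.Icc (m + 1) (N - 1) = Finset.Ioc m (N - 1) := by
      ext k; simp only [Finset.mem_Icc, Finset.mem_Ioc]; omega
    have split1 : (∑ i ∈ Finset.Ioc 0 1, x i • H N m i)
        + ∑ i ∈ Finset.Ioc 1 N, x i • H N m i = ∑ i ∈ Finset.Ioc 0 N, x i • H N m i :=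
      Finset.sum_Ioc_consecutive _ (by omega) (by omega)
    have split2 : (∑ i ∈ Finset.Ioc 1 m, x i • H N m i)
        + ∑ i ∈ Finset.Ioc m N, x i • H N m i = ∑ i ∈ Finset.Ioc 1 N, x i • H N m i :=
      Finset.sum_Ioc_consecutive _ (by omega) (by omega)
    have split3 : (∑ i ∈ Finset.Ioc m (N - 1), x i • H N m i)
        + ∑ i ∈ Finset.Ioc (N - 1) N, x i • H N m i = ∑ i ∈ Finset.Ioc m N, x i • H N m i :=
      Finset.sum_Ioc_consecutive _ (by omega) (by omega)
    have s01 : ∑ i ∈ Finset.Ioc 0 1, x i • H N m i = x 1 • P := by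
      have : Finset.Ioc 0 1 = {1} := by ext k; simp only [Finset.mem_Ioc, Finset.mem_singleton]; omega
      rw [this, Finset.sum_singleton, hH1]
    have sNN : ∑ i ∈ Finset.Ioc (N - 1) N, x i • H N m i = x N • Q := by
      have : Finset.Ioc (N - 1) N = {N} := by
        ext k; simp only [Finset.mem_Ioc, Finset.mem_singleton]; omega
      rw [this, Finset.sum_singleton, hHN]
    have s2m : ∑ i ∈ Finset.Ioc 1 m, x i • H N m i = K₁ := by
      rw [hK1def, e2]
      apply Finset.sum_congr rfl
      intro i hi
      simp only [Finset.mem_Ioc] at hi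
      have h1 : ¬ (i = 1) := by omega
      simp [H, h1, hi.2]
    have smN : ∑ i ∈ Finset.Ioc m (N - 1), x i • H N m i = K₂ := by
      rw [hK2def, e3]
      apply Finset.sum_congr rfl
      intro i hi
      simp only [Finset.mem_Ioc] at hi
      have h1 : ¬ (i = 1) := by omega
      have h2 : ¬ (i ≤ m) := by omega
      simp [H, h1, h2, hi.2]
    rw [e1, ← split1, ← split2, ← split3, s01, sNN, s2m, smN]
    abel
  -- product identities
  have hPP : P * P = P := by
    conv_lhs => rw [hPdef, Finset.sum_mul]
    refine Eq.trans (Finset.sum_congr rfl fun k hk => ?_) hPdef.symm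
    simp only [Finset.mem_Icc] at hk
    rw [mul_sumdiag N 1 m k k hk.1 (by omega), if_pos (Finset.mem_Icc.mpr hk)]
  have hQQ : Q * Q = Q := by
    conv_lhs => rw [hQdef, Finset.sum_mul]
    refine Eq.trans (Finset.sum_congr rfl fun k hk => ?_) hQdef.symm
    simp only [Finset.mem_Icc] at hk
    rw [mul_sumdiag N (m + 1) N k k (by omega) hk.2, if_pos (Finset.mem_Icc.mpr hk)]
  have hPQ : P * Q = 0 := by
    rw [hQdef, Finset.mul_sum]
    apply Finset.sum_eq_zero
    intro k hk
    simp only [Finset.mem_Icc] at hk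
    rw [hPdef, sumdiag_mul N 1 m k k (by omega) hk.2, if_neg]
    simp only [Finset.mem_Icc]; omega
  have hQP : Q * P = 0 := by
    rw [hPdef, Finset.mul_sum]
    apply Finset.sum_eq_zero
    intro k hk
    simp only [Finset.mem_Icc] at hk
    rw [hQdef, sumdiag_mul N (m + 1) N k k hk.1 (by omega), if_neg]
    simp only [Finset.mem_Icc]; omega
  have hPK₁ : P * K₁ = K₁ := by
    rw [hK1def, Finset.mul_sum]
    apply Finset.sum_congr rfl
    intro i hi
    simp only [Finset.mem_Icc] at hi
    rw [mul_smul_comm, hPdef, sumdiag_mul N 1 m i 1 (by omega) (by omega),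
      if_pos (Finset.mem_Icc.mpr ⟨by omega, hi.2⟩)]
  have hK₁P : K₁ * P = K₁ := by
    rw [hK1def, Finset.sum_mul]
    apply Finset.sum_congr rfl
    intro i hi
    rw [smul_mul_assoc, hPdef, mul_sumdiag N 1 m i 1 le_rfl (by omega),
      if_pos (Finset.mem_Icc.mpr ⟨le_rfl, by omega⟩)]
  have hPK₂ : P * K₂ = 0 := by
    rw [hK2def, Finset.mul_sum]
    apply Finset.sum_eq_zero
    intro j hj
    simp only [Finset.mem_Icc] at hj
    rw [mul_smul_comm, hPdef, sumdiag_mul N 1 m j N (by omega) (by omega), if_neg, smul_zero]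
    simp only [Finset.mem_Icc]; omega
  have hK₂P : K₂ * P = 0 := by
    rw [hK2def, Finset.sum_mul]
    apply Finset.sum_eq_zero
    intro j hj
    rw [smul_mul_assoc, hPdef, mul_sumdiag N 1 m j N (by omega) le_rfl, if_neg, smul_zero]
    simp only [Finset.mem_Icc]; omega
  have hQK₁ : Q * K₁ = 0 := by
    rw [hK1def, Finset.mul_sum]
    apply Finset.sum_eq_zero
    intro i hi
    simp only [Finset.mem_Icc] at hi
    rw [mul_smul_comm, hQdef, sumdiag_mul N (m + 1) N i 1 (by omega) (by omega), if_neg,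
      smul_zero]
    simp only [Finset.mem_Icc]; omega
  have hK₁Q : K₁ * Q = 0 := by
    rw [hK1def, Finset.sum_mul]
    apply Finset.sum_eq_zero
    intro i hi
    rw [smul_mul_assoc, hQdef, mul_sumdiag N (m + 1) N i 1 le_rfl (by omega), if_neg,
      smul_zero]
    simp only [Finset.mem_Icc]; omega
  have hQK₂ : Q * K₂ = K₂ := by
    rw [hK2def, Finset.mul_sum]
    apply Finset.sum_congr rfl
    intro j hj
    simp only [Finset.mem_Icc] at hj
    rw [mul_smul_comm, hQdef, sumdiag_mul N (m + 1) N j N (by omega) (by omega),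
      if_pos (Finset.mem_Icc.mpr ⟨hj.1, by omega⟩)]
  have hK₂Q : K₂ * Q = K₂ := by
    rw [hK2def, Finset.sum_mul]
    apply Finset.sum_congr rfl
    intro j hj
    rw [smul_mul_assoc, hQdef, mul_sumdiag N (m + 1) N j N (by omega) le_rfl,
      if_pos (Finset.mem_Icc.mpr ⟨hm1N, le_rfl⟩)]
  have hK₁K₁ : K₁ * K₁ = 0 := by
    rw [hK1def, Finset.sum_mul]
    apply Finset.sum_eq_zero
    intro i hi
    rw [Finset.mul_sum]
    apply Finset.sum_eq_zero
    intro i' hi'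
    simp only [Finset.mem_Icc] at hi'
    rw [smul_mul_assoc, mul_smul_comm, E_mul_ne N i 1 i' 1 (by omega), smul_zero, smul_zero]
  have hK₁K₂ : K₁ * K₂ = 0 := by
    rw [hK1def, Finset.sum_mul]
    apply Finset.sum_eq_zero
    intro i hi
    rw [hK2def, Finset.mul_sum]
    apply Finset.sum_eq_zero
    intro j hj
    simp only [Finset.mem_Icc] at hj
    rw [smul_mul_assoc, mul_smul_comm, E_mul_ne N i 1 j N (by omega), smul_zero, smul_zero]
  have hK₂K₁ : K₂ * K₁ = 0 := by
    rw [hK2def, Finset.sum_mul]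
    apply Finset.sum_eq_zero
    intro j hj
    rw [hK1def, Finset.mul_sum]
    apply Finset.sum_eq_zero
    intro i hi
    simp only [Finset.mem_Icc] at hi
    rw [smul_mul_assoc, mul_smul_comm, E_mul_ne N j N i 1 (by omega), smul_zero, smul_zero]
  have hK₂K₂ : K₂ * K₂ = 0 := by
    rw [hK2def, Finset.sum_mul]
    apply Finset.sum_eq_zero
    intro j hj
    rw [Finset.mul_sum]
    apply Finset.sum_eq_zero
    intro j' hj'
    simp only [Finset.mem_Icc] at hj'
    rw [smul_mul_assoc, mul_smul_comm, E_mul_ne N j N j' N (by omega), smul_zero, smul_zero]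
  set K : Matrix (Fin N) (Fin N) ℝ := K₁ + K₂ with hKdef
  have hKK : K * K = 0 := by
    rw [hKdef, add_mul, mul_add, mul_add, hK₁K₁, hK₁K₂, hK₂K₁, hK₂K₂]
    simp
  -- exp computation
  have hc1 : Commute (x N • Q) K := by
    show _ = _
    simp only [hKdef, mul_add, add_mul, smul_mul_assoc, mul_smul_comm,
      hQK₁, hQK₂, hK₁Q, hK₂Q, smul_zero, zero_add, add_zero]
  have hc2 : Commute (x 1 • P) (x N • Q + K) := by
    show _ = _
    simp only [hKdef, mul_add, add_mul, smul_mul_assoc, mul_smul_comm, smul_smul,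
      hPQ, hQP, hPK₁, hPK₂, hK₁P, hK₂P, smul_zero, zero_add, add_zero, mul_comm]
  rw [hsplit]
  have : x 1 • P + x N • Q + K = x 1 • P + (x N • Q + K) := by abel
  rw [this, Matrix.exp_add_of_commute _ _ hc2, Matrix.exp_add_of_commute _ _ hc1,
    Matrix.exp_smul_idem P hPP (x 1), Matrix.exp_smul_idem Q hQQ (x N),
    Matrix.exp_sq_zero K hKK]
  -- final algebra
  have hrhs1 : ∑ i ∈ Finset.Icc 2 m, (x i * Real.exp (x 1)) • E N i 1
      = Real.exp (x 1) • K₁ := by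
    rw [hK1def, Finset.smul_sum]
    apply Finset.sum_congr rfl
    intro i _
    rw [mul_comm, ← smul_smul]
  have hrhs2 : ∑ j ∈ Finset.Icc (m + 1) (N - 1), (x j * Real.exp (x N)) • E N j N
      = Real.exp (x N) • K₂ := by
    rw [hK2def, Finset.smul_sum]
    apply Finset.sum_congr rfl
    intro j _
    rw [mul_comm, ← smul_smul]
  rw [hH1, hHN, hrhs1, hrhs2]
  have expand : (1 + (Real.exp (x 1) - 1) • P) * (1 + (Real.exp (x N) - 1) • Q) * (1 + K)
      = 1 + (Real.exp (x 1) - 1) • P + (Real.exp (x N) - 1) • Q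
        + Real.exp (x 1) • K₁ + Real.exp (x N) • K₂ := by
    rw [hKdef]
    exact expand_aux P Q K₁ K₂ (x 1) (x N) hPQ hPK₁ hPK₂ hQK₁ hQK₂
  rw [← mul_assoc, expand]
end

section
/- For g = exp(Σ_{i=1}^N x_i H_i) and any indices 2 ≤ k, n ≤ m, one has g^{-1} E_{k,n} g = E_{k,n} + x_n E_{k,1}. -/
open scoped BigOperators

lemma E_mul_E (N i j a b : ℕ) (h1 : 1 ≤ j) (h2 : j ≤ N) :
    E N i j * E N a b = if j = a then E N i b else 0 := by
  ext p q
  rw [Matrix.mul_apply]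
  rw [Finset.sum_eq_single (⟨j - 1, by omega⟩ : Fin N)]
  · simp only [E, Matrix.of_apply]
    split_ifs <;> simp_all <;> omega
  · intro z _ hz'
    simp only [E, Matrix.of_apply]
    have : ¬ (z.val + 1 = j) := by
      intro h
      apply hz'
      apply Fin.ext
      simp only []
      omega
    simp [this]
  · intro h; exact absurd (Finset.mem_univ _) h

lemma sum_diag_mul (N : ℕ) (s : Finset ℕ) (hall : ∀ a ∈ s, 1 ≤ a ∧ a ≤ N) (c d : ℕ) :
    (∑ a ∈ s, E N a a) * E N c d = if c ∈ s then E N c d else 0 := by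
  rw [Finset.sum_mul]
  rw [Finset.sum_congr rfl (fun a ha => E_mul_E N a a c d (hall a ha).1 (hall a ha).2)]
  have h : ∀ a ∈ s, (if a = c then E N a d else 0) = if a = c then E N c d else 0 := by
    intro a _
    by_cases h' : a = c
    · rw [if_pos h', if_pos h', h']
    · rw [if_neg h', if_neg h']
  rw [Finset.sum_congr rfl h, Finset.sum_ite_eq' s c (fun _ => E N c d)]

lemma mul_sum_diag (N : ℕ) (s : Finset ℕ) (c d : ℕ) (hd1 : 1 ≤ d) (hd2 : d ≤ N) :
    E N c d * (∑ a ∈ s, E N a a) = if d ∈ s then E N c d else 0 := by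
  rw [Finset.mul_sum]
  rw [Finset.sum_congr rfl (fun a _ => E_mul_E N c d a a hd1 hd2)]
  rw [Finset.sum_ite_eq s d (fun a => E N c a)]

/-- exp of a square-zero matrix. -/
lemma exp_sq_zero {N : ℕ} (A : Matrix (Fin N) (Fin N) ℝ) (h : A * A = 0) :
    NormedSpace.exp A = 1 + A := by
  rw [NormedSpace.exp_eq_tsum ℝ]
  show ∑' n : ℕ, (n.factorial : ℝ)⁻¹ • A ^ n = 1 + A
  have hz : ∀ n ∉ Finset.range 2, (n.factorial : ℝ)⁻¹ • A ^ n = 0 := by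
    intro n hn
    rw [Finset.mem_range, not_lt] at hn
    have : A ^ n = A ^ 2 * A ^ (n - 2) := by rw [← pow_add]; congr 1; omega
    rw [this, pow_two, h, zero_mul, smul_zero]
  rw [tsum_eq_sum hz]
  simp [Finset.sum_range_succ, Nat.factorial]

theorem adjoint_Ekn (N m : ℕ) (hN : 3 ≤ N) (hm1 : 2 ≤ m) (hm2 : m ≤ N - 1)
    (x : ℕ → ℝ) (k n : ℕ) (hk1 : 2 ≤ k) (hk2 : k ≤ m) (hn1 : 2 ≤ n) (hn2 : n ≤ m) :
    (NormedSpace.exp (∑ i ∈ Finset.Icc 1 N, x i • H N m i))⁻¹ * E N k n *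
        NormedSpace.exp (∑ i ∈ Finset.Icc 1 N, x i • H N m i) =
      E N k n + x n • E N k 1 := by
  have hmN : m ≤ N := by omega
  obtain ⟨P, hP⟩ : ∃ X : Matrix (Fin N) (Fin N) ℝ, X = ∑ a ∈ Finset.Icc 1 m, E N a a := ⟨_, rfl⟩
  obtain ⟨Q, hQ⟩ : ∃ X : Matrix (Fin N) (Fin N) ℝ,
      X = ∑ a ∈ Finset.Icc (m+1) N, E N a a := ⟨_, rfl⟩
  obtain ⟨Ni, hNi⟩ : ∃ X : Matrix (Fin N) (Fin N) ℝ,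
      X = (∑ i ∈ Finset.Icc 2 m, x i • E N i 1)
        + ∑ j ∈ Finset.Icc (m+1) (N-1), x j • E N j N := ⟨_, rfl⟩
  obtain ⟨D, hD⟩ : ∃ X : Matrix (Fin N) (Fin N) ℝ, X = x 1 • P + x N • Q := ⟨_, rfl⟩
  have hallP : ∀ a ∈ Finset.Icc 1 m, 1 ≤ a ∧ a ≤ N := by
    intro a ha; rw [Finset.mem_Icc] at ha; omega
  have hallQ : ∀ a ∈ Finset.Icc (m+1) N, 1 ≤ a ∧ a ≤ N := by
    intro a ha; rw [Finset.mem_Icc] at ha; omega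
  -- Step 1: the sum is D + Ni
  have hA : (∑ i ∈ Finset.Icc 1 N, x i • H N m i) = D + Ni := by
    have e0 : Finset.Icc 1 N = Finset.Ioc 0 N := by rw [← Finset.Icc_add_one_left_eq_Ioc]; rfl
    have e1 : (∑ i ∈ Finset.Ioc 0 1, x i • H N m i) + (∑ i ∈ Finset.Ioc 1 m, x i • H N m i)
        = ∑ i ∈ Finset.Ioc 0 m, x i • H N m i :=
      Finset.sum_Ioc_consecutive _ (by omega) (by omega)
    have e2 : (∑ i ∈ Finset.Ioc 0 m, x i • H N m i) + (∑ i ∈ Finset.Ioc m (N-1), x i • H N m i)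
        = ∑ i ∈ Finset.Ioc 0 (N-1), x i • H N m i :=
      Finset.sum_Ioc_consecutive _ (by omega) (by omega)
    have e3 : (∑ i ∈ Finset.Ioc 0 (N-1), x i • H N m i) + (∑ i ∈ Finset.Ioc (N-1) N, x i • H N m i)
        = ∑ i ∈ Finset.Ioc 0 N, x i • H N m i :=
      Finset.sum_Ioc_consecutive _ (by omega) (by omega)
    have one : Finset.Ioc 0 1 = {1} := rfl
    have lastset : Finset.Ioc (N-1) N = {N} := by
      rw [← Finset.Icc_add_one_left_eq_Ioc]
      have : N - 1 + 1 = N := by omega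
      rw [this, Finset.Icc_self]
    have h1 : H N m 1 = P := by simp [H, hP]
    have hNN : H N m N = Q := by
      have h1' : ¬ (N = 1) := by omega
      have h2' : ¬ (N ≤ m) := by omega
      have h3' : ¬ (N ≤ N - 1) := by omega
      simp [H, h1', h2', h3', hQ]
    have hmid1 : ∀ i ∈ Finset.Ioc 1 m, x i • H N m i = x i • E N i 1 := by
      intro i hi; rw [Finset.mem_Ioc] at hi
      have : ¬ (i = 1) := by omega
      simp [H, this, hi.2]
    have hmid2 : ∀ i ∈ Finset.Ioc m (N-1), x i • H N m i = x i • E N i N := by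
      intro i hi; rw [Finset.mem_Ioc] at hi
      have h1' : ¬ (i = 1) := by omega
      have h2' : ¬ (i ≤ m) := by omega
      simp [H, h1', h2', hi.2]
    have hIcc2m : Finset.Ioc 1 m = Finset.Icc 2 m := by rw [← Finset.Icc_add_one_left_eq_Ioc]; rfl
    have hIccmN : Finset.Ioc m (N-1) = Finset.Icc (m+1) (N-1) := by rw [← Finset.Icc_add_one_left_eq_Ioc]
    rw [e0, ← e3, ← e2, ← e1, one, lastset, Finset.sum_singleton, Finset.sum_singleton,
      Finset.sum_congr rfl hmid1, Finset.sum_congr rfl hmid2, h1, hNN,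
      hIcc2m, hIccmN, hD, hNi]
    abel
  -- products of Ni with E N k d
  have hNi_mul : ∀ d : ℕ, Ni * E N k d = 0 := by
    intro d
    rw [hNi, add_mul, Finset.sum_mul, Finset.sum_mul]
    rw [Finset.sum_eq_zero, Finset.sum_eq_zero, add_zero]
    · intro j hj; rw [Finset.mem_Icc] at hj
      rw [smul_mul_assoc, E_mul_E N j N k d (by omega) (by omega), if_neg (by omega), smul_zero]
    · intro i hi; rw [Finset.mem_Icc] at hi
      rw [smul_mul_assoc, E_mul_E N i 1 k d (by omega) (by omega), if_neg (by omega), smul_zero]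
  have hE_mul_Ni : E N k n * Ni = x n • E N k 1 := by
    rw [hNi, mul_add, Finset.mul_sum, Finset.mul_sum]
    have t1 : ∀ i ∈ Finset.Icc 2 m, E N k n * (x i • E N i 1)
        = if n = i then x i • E N k 1 else 0 := by
      intro i hi
      rw [mul_smul_comm, E_mul_E N k n i 1 (by omega) (by omega)]
      split_ifs <;> simp
    have t2 : ∀ j ∈ Finset.Icc (m+1) (N-1), E N k n * (x j • E N j N) = 0 := by
      intro j hj; rw [Finset.mem_Icc] at hj
      rw [mul_smul_comm, E_mul_E N k n j N (by omega) (by omega), if_neg (by omega), smul_zero]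
    rw [Finset.sum_congr rfl t1, Finset.sum_congr rfl t2, Finset.sum_const_zero, add_zero,
      Finset.sum_ite_eq (Finset.Icc 2 m) n (fun i => x i • E N k 1),
      if_pos (Finset.mem_Icc.mpr ⟨hn1, hn2⟩)]
  -- Ni is square-zero
  have hsq : Ni * Ni = 0 := by
    nth_rewrite 2 [hNi]
    rw [mul_add]
    have z1 : Ni * (∑ i ∈ Finset.Icc 2 m, x i • E N i 1) = 0 := by
      rw [Finset.mul_sum, Finset.sum_eq_zero]
      intro i hi; rw [Finset.mem_Icc] at hi
      rw [mul_smul_comm, hNi, add_mul, Finset.sum_mul, Finset.sum_mul]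
      rw [Finset.sum_eq_zero, Finset.sum_eq_zero, add_zero, smul_zero]
      · intro j hj; rw [Finset.mem_Icc] at hj
        rw [smul_mul_assoc, E_mul_E N j N i 1 (by omega) (by omega), if_neg (by omega), smul_zero]
      · intro a ha; rw [Finset.mem_Icc] at ha
        rw [smul_mul_assoc, E_mul_E N a 1 i 1 (by omega) (by omega), if_neg (by omega), smul_zero]
    have z2 : Ni * (∑ j ∈ Finset.Icc (m+1) (N-1), x j • E N j N) = 0 := by
      rw [Finset.mul_sum, Finset.sum_eq_zero]
      intro i hi; rw [Finset.mem_Icc] at hi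
      rw [mul_smul_comm, hNi, add_mul, Finset.sum_mul, Finset.sum_mul]
      rw [Finset.sum_eq_zero, Finset.sum_eq_zero, add_zero, smul_zero]
      · intro j hj; rw [Finset.mem_Icc] at hj
        rw [smul_mul_assoc, E_mul_E N j N i N (by omega) (by omega), if_neg (by omega), smul_zero]
      · intro a ha; rw [Finset.mem_Icc] at ha
        rw [smul_mul_assoc, E_mul_E N a 1 i N (by omega) (by omega), if_neg (by omega), smul_zero]
    rw [z1, z2, add_zero]
  -- Commute D Ni
  have hPNi : P * Ni = ∑ i ∈ Finset.Icc 2 m, x i • E N i 1 := by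
    rw [hNi, mul_add, Finset.mul_sum, Finset.mul_sum]
    have t1 : ∀ i ∈ Finset.Icc 2 m, P * (x i • E N i 1) = x i • E N i 1 := by
      intro i hi; rw [Finset.mem_Icc] at hi
      rw [mul_smul_comm, hP, sum_diag_mul N _ hallP i 1,
        if_pos (Finset.mem_Icc.mpr ⟨by omega, hi.2⟩)]
    have t2 : ∀ j ∈ Finset.Icc (m+1) (N-1), P * (x j • E N j N) = 0 := by
      intro j hj; rw [Finset.mem_Icc] at hj
      rw [mul_smul_comm, hP, sum_diag_mul N _ hallP j N,
        if_neg (by rw [Finset.mem_Icc]; omega), smul_zero]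
    rw [Finset.sum_congr rfl t1, Finset.sum_congr rfl t2, Finset.sum_const_zero, add_zero]
  have hNiP : Ni * P = ∑ i ∈ Finset.Icc 2 m, x i • E N i 1 := by
    rw [hNi, add_mul, Finset.sum_mul, Finset.sum_mul]
    have t1 : ∀ i ∈ Finset.Icc 2 m, (x i • E N i 1) * P = x i • E N i 1 := by
      intro i hi
      rw [smul_mul_assoc, hP, mul_sum_diag N _ i 1 (by omega) (by omega),
        if_pos (Finset.mem_Icc.mpr ⟨le_refl 1, by omega⟩)]
    have t2 : ∀ j ∈ Finset.Icc (m+1) (N-1), (x j • E N j N) * P = 0 := by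
      intro j hj
      rw [smul_mul_assoc, hP, mul_sum_diag N _ j N (by omega) (by omega),
        if_neg (by rw [Finset.mem_Icc]; omega), smul_zero]
    rw [Finset.sum_congr rfl t1, Finset.sum_congr rfl t2, Finset.sum_const_zero, add_zero]
  have hQNi : Q * Ni = ∑ j ∈ Finset.Icc (m+1) (N-1), x j • E N j N := by
    rw [hNi, mul_add, Finset.mul_sum, Finset.mul_sum]
    have t1 : ∀ i ∈ Finset.Icc 2 m, Q * (x i • E N i 1) = 0 := by
      intro i hi; rw [Finset.mem_Icc] at hi
      rw [mul_smul_comm, hQ, sum_diag_mul N _ hallQ i 1,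
        if_neg (by rw [Finset.mem_Icc]; omega), smul_zero]
    have t2 : ∀ j ∈ Finset.Icc (m+1) (N-1), Q * (x j • E N j N) = x j • E N j N := by
      intro j hj; rw [Finset.mem_Icc] at hj
      rw [mul_smul_comm, hQ, sum_diag_mul N _ hallQ j N,
        if_pos (Finset.mem_Icc.mpr ⟨hj.1, by omega⟩)]
    rw [Finset.sum_congr rfl t1, Finset.sum_congr rfl t2, Finset.sum_const_zero, zero_add]
  have hNiQ : Ni * Q = ∑ j ∈ Finset.Icc (m+1) (N-1), x j • E N j N := by
    rw [hNi, add_mul, Finset.sum_mul, Finset.sum_mul]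
    have t1 : ∀ i ∈ Finset.Icc 2 m, (x i • E N i 1) * Q = 0 := by
      intro i hi
      rw [smul_mul_assoc, hQ, mul_sum_diag N _ i 1 (by omega) (by omega),
        if_neg (by rw [Finset.mem_Icc]; omega), smul_zero]
    have t2 : ∀ j ∈ Finset.Icc (m+1) (N-1), (x j • E N j N) * Q = x j • E N j N := by
      intro j hj; rw [Finset.mem_Icc] at hj
      rw [smul_mul_assoc, hQ, mul_sum_diag N _ j N (by omega) (by omega),
        if_pos (Finset.mem_Icc.mpr ⟨by omega, by omega⟩)]
    rw [Finset.sum_congr rfl t1, Finset.sum_congr rfl t2, Finset.sum_const_zero, zero_add]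
  have hDNi : Commute D Ni := by
    show D * Ni = Ni * D
    rw [hD, add_mul, mul_add, smul_mul_assoc, smul_mul_assoc, mul_smul_comm, mul_smul_comm,
      hPNi, hNiP, hQNi, hNiQ]
  -- Commute D (E N k n)
  have hDE : Commute D (E N k n) := by
    show D * E N k n = E N k n * D
    rw [hD, add_mul, mul_add, smul_mul_assoc, smul_mul_assoc, mul_smul_comm, mul_smul_comm, hP, hQ,
      sum_diag_mul N _ hallP k n, sum_diag_mul N _ hallQ k n,
      mul_sum_diag N _ k n (by omega) (by omega), mul_sum_diag N _ k n (by omega) (by omega),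
      if_pos (Finset.mem_Icc.mpr ⟨by omega, hk2⟩), if_pos (Finset.mem_Icc.mpr ⟨by omega, hn2⟩),
      if_neg (by rw [Finset.mem_Icc]; omega), if_neg (by rw [Finset.mem_Icc]; omega)]
  -- exp computations
  have hexpNi : NormedSpace.exp Ni = 1 + Ni := exp_sq_zero Ni hsq
  have hexpnegNi : NormedSpace.exp (-Ni) = 1 - Ni := by
    rw [exp_sq_zero (-Ni) (by rw [neg_mul_neg, hsq]), ← sub_eq_add_neg]
  rw [hA]
  have hexpA : NormedSpace.exp (D + Ni) = NormedSpace.exp D * (1 + Ni) := by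
    rw [Matrix.exp_add_of_commute D Ni hDNi, hexpNi]
  have hexpAinv : (NormedSpace.exp (D + Ni))⁻¹ = (1 - Ni) * NormedSpace.exp (-D) := by
    rw [← Matrix.exp_neg, neg_add, add_comm,
      Matrix.exp_add_of_commute (-Ni) (-D) hDNi.symm.neg_left.neg_right, hexpnegNi]
  rw [hexpAinv, hexpA]
  have hcomm : NormedSpace.exp (-D) * E N k n = E N k n * NormedSpace.exp (-D) :=
    (hDE.neg_left.exp_left).eq
  have hDinv : NormedSpace.exp (-D) * NormedSpace.exp D = 1 := by
    rw [← Matrix.exp_add_of_commute (-D) D (Commute.refl D).neg_left, neg_add_cancel,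
      NormedSpace.exp_zero]
  calc (1 - Ni) * NormedSpace.exp (-D) * E N k n * (NormedSpace.exp D * (1 + Ni))
      = (1 - Ni) * (E N k n * (NormedSpace.exp (-D) * NormedSpace.exp D)) * (1 + Ni) := by
        rw [mul_assoc (1 - Ni), hcomm]; noncomm_ring
    _ = (1 - Ni) * E N k n * (1 + Ni) := by rw [hDinv, mul_one]
    _ = E N k n + E N k n * Ni - Ni * E N k n - Ni * (E N k n * Ni) := by noncomm_ring
    _ = E N k n + x n • E N k 1 := by
        rw [hE_mul_Ni, hNi_mul n, mul_smul_comm, hNi_mul 1, smul_zero, sub_zero, sub_zero]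
end

section
/- For g = exp(Σ_{i=1}^N x_i H_i) and any indices m+1 ≤ a ≤ N-1 and a ≤ b ≤ N-1, one has g^{-1} E_{a,b} g = E_{a,b} + x_b E_{a,N}. -/
open scoped BigOperators

lemma E_eq_std (N i j : ℕ) (hN : 1 ≤ N) (hi : 1 ≤ i) (hi' : i ≤ N) (hj : 1 ≤ j) (hj' : j ≤ N) :
    E N i j = Matrix.single (⟨i - 1, by omega⟩ : Fin N) (⟨j - 1, by omega⟩ : Fin N)
      (1 : ℝ) := by
  ext p q
  simp only [E, Matrix.of_apply, Matrix.single, Fin.ext_iff]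
  have hp := p.isLt
  have hq := q.isLt
  by_cases h : p.val + 1 = i ∧ q.val + 1 = j
  · rw [if_pos h, if_pos]; omega
  · rw [if_neg h, if_neg]; omega

lemma E_mul_E_s4 (N i j k l : ℕ) (hN : 1 ≤ N) (hi : 1 ≤ i) (hi' : i ≤ N) (hj : 1 ≤ j) (hj' : j ≤ N)
    (hk : 1 ≤ k) (hk' : k ≤ N) (hl : 1 ≤ l) (hl' : l ≤ N) :
    E N i j * E N k l = if j = k then E N i l else 0 := by
  rw [E_eq_std N i j hN hi hi' hj hj', E_eq_std N k l hN hk hk' hl hl']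
  by_cases h : j = k
  · subst h
    have : (⟨j - 1, by omega⟩ : Fin N) = ⟨j - 1, by omega⟩ := rfl
    rw [if_pos rfl, Matrix.single_mul_single_same, one_mul,
      E_eq_std N i l hN hi hi' hl hl']
  · rw [if_neg h, Matrix.single_mul_single_of_ne]
    exact fun hc => h (by have := Fin.mk.injEq .. ▸ hc; omega)

section GeneralExp

open NormedSpace

variable {𝔸 : Type*} [NormedRing 𝔸] [NormedAlgebra ℝ 𝔸] [CompleteSpace 𝔸]

lemma exp_mul_left_eq (T A : 𝔸) (h : T * A = 0) : exp T * A = A := by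
  rw [exp_eq_tsum (𝕂 := ℝ), ← (expSeries_summable' (𝕂 := ℝ) T).tsum_mul_right A]
  rw [tsum_eq_single 0]
  · simp
  · intro n hn
    obtain ⟨k, rfl⟩ := Nat.exists_eq_succ_of_ne_zero hn
    have : T ^ (k + 1) * A = 0 := by
      rw [pow_succ, mul_assoc, h, mul_zero]
    rw [smul_mul_assoc, this, smul_zero]

lemma mul_exp_right_eq (A T D : 𝔸) (hAT : A * T = D) (hDT : D * T = 0) :
    A * exp T = A + D := by
  have key : ∀ n : ℕ, A * T ^ (n + 1) = D * T ^ n := by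
    intro n
    induction n with
    | zero => simpa using hAT
    | succ k ih =>
      rw [pow_succ, ← mul_assoc, ih, mul_assoc, ← pow_succ]
  rw [exp_eq_tsum (𝕂 := ℝ), ← (expSeries_summable' (𝕂 := ℝ) T).tsum_mul_left A]
  rw [tsum_eq_sum (s := {0, 1}) ?_]
  · simp [Finset.sum_pair, mul_smul_comm, key 0, hAT]
  · intro n hn
    simp only [Finset.mem_insert, Finset.mem_singleton] at hn
    push_neg at hn
    obtain ⟨k, rfl⟩ := Nat.exists_eq_succ_of_ne_zero hn.1
    have hk : k ≠ 0 := fun h => hn.2 (by omega)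
    obtain ⟨k', rfl⟩ := Nat.exists_eq_succ_of_ne_zero hk
    have hDn : ∀ n : ℕ, D * T ^ (n + 1) = 0 := by
      intro n
      rw [pow_succ', ← mul_assoc, hDT, zero_mul]
    have : A * T ^ (k' + 1 + 1) = 0 := by rw [key (k' + 1), hDn k']
    rw [mul_smul_comm, this, smul_zero]

lemma exp_smul_one_eq (c : ℝ) : exp (c • (1 : 𝔸)) = Real.exp c • (1 : 𝔸) := by
  rw [← Algebra.algebraMap_eq_smul_one, ← algebraMap_exp_comm,
    Algebra.algebraMap_eq_smul_one, Real.exp_eq_exp_ℝ]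

end GeneralExp

section MatrixWrap

variable {n : Type*} [Fintype n] [DecidableEq n]

lemma mat_exp_mul_left_eq (T A : Matrix n n ℝ) (h : T * A = 0) :
    NormedSpace.exp T * A = A := by
  letI : SeminormedRing (Matrix n n ℝ) := Matrix.linftyOpSemiNormedRing
  letI : NormedRing (Matrix n n ℝ) := Matrix.linftyOpNormedRing
  letI : NormedAlgebra ℝ (Matrix n n ℝ) := Matrix.linftyOpNormedAlgebra
  exact exp_mul_left_eq T A h

lemma mat_mul_exp_right_eq (A T D : Matrix n n ℝ) (hAT : A * T = D) (hDT : D * T = 0) :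
    A * NormedSpace.exp T = A + D := by
  letI : SeminormedRing (Matrix n n ℝ) := Matrix.linftyOpSemiNormedRing
  letI : NormedRing (Matrix n n ℝ) := Matrix.linftyOpNormedRing
  letI : NormedAlgebra ℝ (Matrix n n ℝ) := Matrix.linftyOpNormedAlgebra
  exact mul_exp_right_eq A T D hAT hDT

lemma mat_exp_smul_one_eq (c : ℝ) :
    NormedSpace.exp (c • (1 : Matrix n n ℝ)) = Real.exp c • (1 : Matrix n n ℝ) := by
  letI : SeminormedRing (Matrix n n ℝ) := Matrix.linftyOpSemiNormedRing
  letI : NormedRing (Matrix n n ℝ) := Matrix.linftyOpNormedRing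
  letI : NormedAlgebra ℝ (Matrix n n ℝ) := Matrix.linftyOpNormedAlgebra
  exact exp_smul_one_eq c

end MatrixWrap

lemma diag_sum_mul (N lo hi a j : ℕ) (hN : 1 ≤ N) (hlo : 1 ≤ lo) (hhi : hi ≤ N)
    (ha : 1 ≤ a) (ha' : a ≤ N) (hj : 1 ≤ j) (hj' : j ≤ N) :
    (∑ k ∈ Finset.Icc lo hi, E N k k) * E N a j =
      if a ∈ Finset.Icc lo hi then E N a j else 0 := by
  rw [Finset.sum_mul]
  have h : ∀ k ∈ Finset.Icc lo hi, E N k k * E N a j = if k = a then E N a j else 0 := by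
    intro k hk
    simp only [Finset.mem_Icc] at hk
    rw [E_mul_E_s4 N k k a j hN (by omega) (by omega) (by omega) (by omega) ha ha' hj hj']
    by_cases h : k = a
    · subst h; simp
    · simp [h]
  rw [Finset.sum_congr rfl h, Finset.sum_ite_eq' (Finset.Icc lo hi) a (fun _ => E N a j)]

lemma mul_diag_sum (N lo hi a j : ℕ) (hN : 1 ≤ N) (hlo : 1 ≤ lo) (hhi : hi ≤ N)
    (ha : 1 ≤ a) (ha' : a ≤ N) (hj : 1 ≤ j) (hj' : j ≤ N) :
    E N a j * (∑ k ∈ Finset.Icc lo hi, E N k k) =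
      if j ∈ Finset.Icc lo hi then E N a j else 0 := by
  rw [Finset.mul_sum]
  have h : ∀ k ∈ Finset.Icc lo hi, E N a j * E N k k = if k = j then E N a j else 0 := by
    intro k hk
    simp only [Finset.mem_Icc] at hk
    rw [E_mul_E_s4 N a j k k hN ha ha' hj hj' (by omega) (by omega) (by omega) (by omega)]
    by_cases h : k = j
    · subst h; simp
    · rw [if_neg (fun hc => h hc.symm), if_neg h]
  rw [Finset.sum_congr rfl h, Finset.sum_ite_eq' (Finset.Icc lo hi) j (fun _ => E N a j)]

theorem adjoint_Eab (N m : ℕ) (hN : 3 ≤ N) (hm1 : 1 ≤ m) (hm2 : m ≤ N - 2)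
    (x : ℕ → ℝ) (a b : ℕ) (ha1 : m + 1 ≤ a) (ha2 : a ≤ N - 1) (hb1 : a ≤ b) (hb2 : b ≤ N - 1) :
    (NormedSpace.exp (∑ i ∈ Finset.Icc 1 N, x i • H N m i))⁻¹ * E N a b *
        NormedSpace.exp (∑ i ∈ Finset.Icc 1 N, x i • H N m i) =
      E N a b + x b • E N a N := by
  have hb2' : m + 1 ≤ b := le_trans ha1 hb1
  set S := ∑ i ∈ Finset.Icc 1 N, x i • H N m i with hSdef
  -- left multiplication of generators
  have hHE : ∀ j : ℕ, m + 1 ≤ j → j ≤ N → ∀ i ∈ Finset.Icc 1 N,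
      H N m i * E N a j = if i = N then E N a j else 0 := by
    intro j hj1 hj2 i hi
    simp only [Finset.mem_Icc] at hi
    unfold H
    by_cases h1 : i = 1
    · subst h1
      rw [if_pos rfl, if_neg (by omega),
        diag_sum_mul N 1 m a j (by omega) (by omega) (by omega) (by omega) (by omega)
          (by omega) (by omega)]
      rw [if_neg (by simp only [Finset.mem_Icc]; omega)]
    · rw [if_neg h1]
      by_cases h2 : i ≤ m
      · rw [if_pos h2, if_neg (by omega),
          E_mul_E_s4 N i 1 a j (by omega) (by omega) (by omega) (by omega) (by omega)
            (by omega) (by omega) (by omega) (by omega), if_neg (by omega)]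
      · rw [if_neg h2]
        by_cases h3 : i ≤ N - 1
        · rw [if_pos h3, if_neg (by omega),
            E_mul_E_s4 N i N a j (by omega) (by omega) (by omega) (by omega) (by omega)
              (by omega) (by omega) (by omega) (by omega), if_neg (by omega)]
        · have h4 : i = N := by omega
          rw [if_neg h3, if_pos h4,
            diag_sum_mul N (m + 1) N a j (by omega) (by omega) (by omega) (by omega)
              (by omega) (by omega) (by omega)]
          rw [if_pos (by simp only [Finset.mem_Icc]; omega)]
  -- right multiplication of generators
  have hEH : ∀ i ∈ Finset.Icc 1 N,
      E N a b * H N m i = if i = b then E N a N else if i = N then E N a b else 0 := by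
    intro i hi
    simp only [Finset.mem_Icc] at hi
    unfold H
    by_cases h1 : i = 1
    · subst h1
      rw [if_pos rfl, if_neg (by omega), if_neg (by omega),
        mul_diag_sum N 1 m a b (by omega) (by omega) (by omega) (by omega) (by omega)
          (by omega) (by omega)]
      rw [if_neg (by simp only [Finset.mem_Icc]; omega)]
    · rw [if_neg h1]
      by_cases h2 : i ≤ m
      · rw [if_pos h2, if_neg (by omega), if_neg (by omega),
          E_mul_E_s4 N a b i 1 (by omega) (by omega) (by omega) (by omega) (by omega)
            (by omega) (by omega) (by omega) (by omega), if_neg (by omega)]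
      · rw [if_neg h2]
        by_cases h3 : i ≤ N - 1
        · rw [if_pos h3,
            E_mul_E_s4 N a b i N (by omega) (by omega) (by omega) (by omega) (by omega)
              (by omega) (by omega) (by omega) (by omega)]
          by_cases h4 : i = b
          · rw [if_pos h4.symm, if_pos h4]
          · rw [if_neg (fun hc => h4 hc.symm), if_neg h4, if_neg (by omega)]
        · have h4 : i = N := by omega
          rw [if_neg h3, if_neg (by omega), if_pos h4,
            mul_diag_sum N (m + 1) N a b (by omega) (by omega) (by omega) (by omega)
              (by omega) (by omega) (by omega)]
          rw [if_pos (by simp only [Finset.mem_Icc]; omega)]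
  have hENH : ∀ i ∈ Finset.Icc 1 N,
      E N a N * H N m i = if i = N then E N a N else 0 := by
    intro i hi
    simp only [Finset.mem_Icc] at hi
    unfold H
    by_cases h1 : i = 1
    · subst h1
      rw [if_pos rfl, if_neg (by omega),
        mul_diag_sum N 1 m a N (by omega) (by omega) (by omega) (by omega) (by omega)
          (by omega) (by omega)]
      rw [if_neg (by simp only [Finset.mem_Icc]; omega)]
    · rw [if_neg h1]
      by_cases h2 : i ≤ m
      · rw [if_pos h2, if_neg (by omega),
          E_mul_E_s4 N a N i 1 (by omega) (by omega) (by omega) (by omega) (by omega)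
            (by omega) (by omega) (by omega) (by omega), if_neg (by omega)]
      · rw [if_neg h2]
        by_cases h3 : i ≤ N - 1
        · rw [if_pos h3, if_neg (by omega),
            E_mul_E_s4 N a N i N (by omega) (by omega) (by omega) (by omega) (by omega)
              (by omega) (by omega) (by omega) (by omega), if_neg (by omega)]
        · have h4 : i = N := by omega
          rw [if_neg h3, if_pos h4,
            mul_diag_sum N (m + 1) N a N (by omega) (by omega) (by omega) (by omega)
              (by omega) (by omega) (by omega)]
          rw [if_pos (by simp only [Finset.mem_Icc]; omega)]
  -- products with S
  have hSE : ∀ j : ℕ, m + 1 ≤ j → j ≤ N → S * E N a j = x N • E N a j := by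
    intro j hj1 hj2
    rw [hSdef, Finset.sum_mul]
    have h : ∀ i ∈ Finset.Icc 1 N,
        (x i • H N m i) * E N a j = if i = N then x i • E N a j else 0 := by
      intro i hi
      rw [smul_mul_assoc, hHE j hj1 hj2 i hi]
      by_cases h : i = N
      · rw [if_pos h, if_pos h]
      · rw [if_neg h, if_neg h, smul_zero]
    rw [Finset.sum_congr rfl h, Finset.sum_ite_eq' (Finset.Icc 1 N) N (fun i => x i • E N a j),
      if_pos (by simp only [Finset.mem_Icc]; omega)]
  have hES : E N a b * S = x b • E N a N + x N • E N a b := by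
    rw [hSdef, Finset.mul_sum]
    have h : ∀ i ∈ Finset.Icc 1 N, E N a b * (x i • H N m i) =
        (if i = b then x i • E N a N else 0) + (if i = N then x i • E N a b else 0) := by
      intro i hi
      rw [mul_smul_comm, hEH i hi]
      by_cases h : i = b
      · rw [if_pos h, if_pos h, if_neg (by omega), add_zero]
      · rw [if_neg h, if_neg h]
        by_cases h2 : i = N
        · rw [if_pos h2, if_pos h2, zero_add]
        · rw [if_neg h2, if_neg h2, smul_zero, add_zero]
    rw [Finset.sum_congr rfl h, Finset.sum_add_distrib,
      Finset.sum_ite_eq' (Finset.Icc 1 N) b (fun i => x i • E N a N),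
      Finset.sum_ite_eq' (Finset.Icc 1 N) N (fun i => x i • E N a b),
      if_pos (by simp only [Finset.mem_Icc]; omega),
      if_pos (by simp only [Finset.mem_Icc]; omega)]
  have hENS : E N a N * S = x N • E N a N := by
    rw [hSdef, Finset.mul_sum]
    have h : ∀ i ∈ Finset.Icc 1 N,
        E N a N * (x i • H N m i) = if i = N then x i • E N a N else 0 := by
      intro i hi
      rw [mul_smul_comm, hENH i hi]
      by_cases h : i = N
      · rw [if_pos h, if_pos h]
      · rw [if_neg h, if_neg h, smul_zero]
    rw [Finset.sum_congr rfl h, Finset.sum_ite_eq' (Finset.Icc 1 N) N (fun i => x i • E N a N),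
      if_pos (by simp only [Finset.mem_Icc]; omega)]
  -- set up T
  set T := S - x N • (1 : Matrix (Fin N) (Fin N) ℝ) with hTdef
  have hTE : T * E N a b = 0 := by
    rw [hTdef, sub_mul, hSE b hb2' (by omega), smul_mul_assoc, one_mul, sub_self]
  have hTEN : T * E N a N = 0 := by
    rw [hTdef, sub_mul, hSE N (by omega) le_rfl, smul_mul_assoc, one_mul, sub_self]
  have hET : E N a b * T = x b • E N a N := by
    rw [hTdef, mul_sub, hES, mul_smul_comm, mul_one, add_sub_cancel_right]
  have hENT : E N a N * T = 0 := by
    rw [hTdef, mul_sub, hENS, mul_smul_comm, mul_one, sub_self]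
  clear hSE hES hENS hHE hEH hENH
  have hS1 : S = x N • (1 : Matrix (Fin N) (Fin N) ℝ) + T := by
    rw [hTdef, add_sub_cancel]
  have hexpS : NormedSpace.exp S = Real.exp (x N) • NormedSpace.exp T := by
    rw [hS1, Matrix.exp_add_of_commute _ _ ((Commute.one_left T).smul_left (x N)),
      mat_exp_smul_one_eq, smul_mul_assoc, one_mul]
  have hexpnegS : NormedSpace.exp (-S) = Real.exp (-(x N)) • NormedSpace.exp (-T) := by
    have h : -S = (-(x N)) • (1 : Matrix (Fin N) (Fin N) ℝ) + (-T) := by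
      rw [hS1, neg_add, neg_smul]
    rw [h, Matrix.exp_add_of_commute _ _ ((Commute.one_left (-T)).smul_left (-(x N))),
      mat_exp_smul_one_eq, smul_mul_assoc, one_mul]
  rw [← Matrix.exp_neg, hexpnegS, hexpS, smul_mul_assoc, smul_mul_assoc, mul_smul_comm,
    smul_smul, ← Real.exp_add, neg_add_cancel, Real.exp_zero, one_smul, mul_assoc,
    mat_mul_exp_right_eq (E N a b) T (x b • E N a N) hET
      (by rw [smul_mul_assoc, hENT, smul_zero]),
    mul_add, mat_exp_mul_left_eq (-T) (E N a b) (by rw [neg_mul, hTE, neg_zero]),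
    mat_exp_mul_left_eq (-T) (x b • E N a N)
      (by rw [mul_smul_comm, neg_mul, hTEN, neg_zero, smul_zero])]
end

section
/- For g = exp(Σ_{i=1}^N x_i H_i) and any indices 2 ≤ k ≤ m and m+1 ≤ a ≤ N-1, one has g^{-1} E_{k,a} g = e^{x_N - x_1} (E_{k,a} + x_a E_{k,N}). -/
open scoped BigOperators

namespace AdjointAux

/-! ### Scalar series lemmas -/

lemma summable_aux (c : ℝ) : Summable (fun n : ℕ => (n.factorial : ℝ)⁻¹ * c ^ n) := by
  simpa [div_eq_mul_inv, mul_comm] using Real.summable_pow_div_factorial c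

lemma tsum_exp_aux (c : ℝ) : ∑' n : ℕ, ((n.factorial : ℝ)⁻¹ * c ^ n) = Real.exp c := by
  rw [Real.exp_eq_exp_ℝ, NormedSpace.exp_eq_tsum ℝ]
  simp [smul_eq_mul]

lemma g_shift (c : ℝ) :
    (fun n : ℕ => ((n+1).factorial : ℝ)⁻¹ * (((n : ℝ) + 1) * c ^ (n + 1 - 1)))
      = fun n : ℕ => (n.factorial : ℝ)⁻¹ * c ^ n := by
  funext n
  have h1 : ((n.factorial : ℝ)) ≠ 0 := Nat.cast_ne_zero.2 n.factorial_ne_zero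
  have h2 : ((n : ℝ) + 1) ≠ 0 := by positivity
  rw [Nat.add_sub_cancel, Nat.factorial_succ]
  push_cast
  field_simp

lemma g_summable (c : ℝ) :
    Summable (fun n : ℕ => (n.factorial : ℝ)⁻¹ * ((n : ℝ) * c ^ (n - 1))) := by
  rw [← summable_nat_add_iff 1]
  have := summable_aux c
  rw [← g_shift c] at this
  convert this using 2 with n
  push_cast
  rfl
  simp

lemma g_tsum (c : ℝ) :
    ∑' n : ℕ, ((n.factorial : ℝ)⁻¹ * ((n : ℝ) * c ^ (n - 1))) = Real.exp c := by
  rw [Summable.tsum_eq_zero_add (g_summable c)]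
  have h0 : (((0:ℕ)).factorial : ℝ)⁻¹ * (((0:ℕ) : ℝ) * c ^ (0 - 1)) = 0 := by simp
  rw [h0, zero_add]
  have : (fun n : ℕ => (((n+1).factorial : ℝ))⁻¹ * (((n+1 : ℕ) : ℝ) * c ^ (n + 1 - 1)))
      = fun n : ℕ => (n.factorial : ℝ)⁻¹ * c ^ n := by
    rw [← g_shift c]; funext n; push_cast; ring_nf
  rw [this, tsum_exp_aux]

/-! ### Matrix exponential lemmas -/

theorem exp_eigen_left {d : ℕ} (X M : Matrix (Fin d) (Fin d) ℝ) (c : ℝ)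
    (h : X * M = c • M) : NormedSpace.exp X * M = Real.exp c • M := by
  letI : SeminormedRing (Matrix (Fin d) (Fin d) ℝ) := Matrix.linftyOpSemiNormedRing
  letI : NormedRing (Matrix (Fin d) (Fin d) ℝ) := Matrix.linftyOpNormedRing
  letI : NormedAlgebra ℝ (Matrix (Fin d) (Fin d) ℝ) := Matrix.linftyOpNormedAlgebra
  have hpow : ∀ j : ℕ, X ^ j * M = (c ^ j) • M := by
    intro j
    induction j with
    | zero => simp
    | succ j ih =>
      rw [pow_succ, mul_assoc, h, Matrix.mul_smul, ih, smul_smul, pow_succ, mul_comm]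
  rw [NormedSpace.exp_eq_tsum ℝ]
  beta_reduce
  erw [← Summable.tsum_mul_right M (NormedSpace.expSeries_summable' (𝕂 := ℝ) X)]
  have key : ∀ j : ℕ, ((j.factorial : ℝ)⁻¹ • X ^ j) * M = ((j.factorial : ℝ)⁻¹ * c ^ j) • M := by
    intro j
    rw [Matrix.smul_mul, hpow, smul_smul]
  erw [tsum_congr key, Summable.tsum_smul_const (summable_aux c), tsum_exp_aux]

theorem exp_jordan_right {d : ℕ} (X M M' : Matrix (Fin d) (Fin d) ℝ) (c : ℝ)
    (h1 : M * X = c • M + M') (h2 : M' * X = c • M') :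
    M * NormedSpace.exp X = Real.exp c • M + Real.exp c • M' := by
  letI : SeminormedRing (Matrix (Fin d) (Fin d) ℝ) := Matrix.linftyOpSemiNormedRing
  letI : NormedRing (Matrix (Fin d) (Fin d) ℝ) := Matrix.linftyOpNormedRing
  letI : NormedAlgebra ℝ (Matrix (Fin d) (Fin d) ℝ) := Matrix.linftyOpNormedAlgebra
  have hpow : ∀ j : ℕ, M * X ^ j = (c ^ j) • M + ((j : ℝ) * c ^ (j - 1)) • M' := by
    intro j
    induction j with
    | zero => simp
    | succ j ih =>
      rcases j with _ | j
      · rw [pow_one, h1]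
        push_cast
        match_scalars <;> ring
      · rw [pow_succ, ← mul_assoc, ih, Matrix.add_mul, Matrix.smul_mul, Matrix.smul_mul, h1, h2]
        simp only [Nat.add_sub_cancel]
        push_cast
        match_scalars <;> ring
  rw [NormedSpace.exp_eq_tsum ℝ]
  beta_reduce
  erw [← Summable.tsum_mul_left M (NormedSpace.expSeries_summable' (𝕂 := ℝ) X)]
  have key : ∀ j : ℕ, M * ((j.factorial : ℝ)⁻¹ • X ^ j)
      = ((j.factorial : ℝ)⁻¹ * c ^ j) • M + ((j.factorial : ℝ)⁻¹ * ((j : ℝ) * c ^ (j - 1))) • M' := by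
    intro j
    rw [Matrix.mul_smul, hpow, smul_add, smul_smul, smul_smul]
  erw [tsum_congr key,
    Summable.tsum_add ((summable_aux c).smul_const M) ((g_summable c).smul_const M'),
    Summable.tsum_smul_const (summable_aux c), Summable.tsum_smul_const (g_summable c),
    tsum_exp_aux, g_tsum]

/-! ### Matrix unit products -/

lemma E_mul_E (N i j p q : ℕ) (hj1 : 1 ≤ j) (hj2 : j ≤ N) :
    E N i j * E N p q = if j = p then E N i q else 0 := by
  ext r s
  rw [Matrix.mul_apply]
  rw [Finset.sum_eq_single (⟨j - 1, by omega⟩ : Fin N)]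
  · simp only [E, Matrix.of_apply]
    have hc : (j - 1) + 1 = j := by omega
    by_cases hjp : j = p <;> by_cases hri : r.val + 1 = i <;> by_cases hsq : s.val + 1 = q <;>
      simp_all <;> omega
  · intro c _ hc
    have hcj : c.val + 1 ≠ j := by
      intro hcj
      apply hc
      apply Fin.ext
      simp only
      omega
    simp only [E, Matrix.of_apply]
    simp [hcj]
  · intro habs
    exact absurd (Finset.mem_univ _) habs

/-! ### The key product identities -/

section Identities

variable (N m k a : ℕ) (x : ℕ → ℝ)

lemma right_a (hN : 4 ≤ N) (hm1 : 2 ≤ m) (hm2 : m ≤ N - 2)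
    (hk1 : 2 ≤ k) (hk2 : k ≤ m) (ha1 : m + 1 ≤ a) (ha2 : a ≤ N - 1) :
    E N k a * (∑ i ∈ Finset.Icc 1 N, x i • H N m i) = x a • E N k N + x N • E N k a := by
  have ha2' : a ≤ N := by omega
  have ha1' : 1 ≤ a := by omega
  rw [Finset.mul_sum]
  have key : ∀ i ∈ Finset.Icc 1 N, E N k a * (x i • H N m i)
      = (if a = i then x i • E N k N else 0) + (if N = i then x i • E N k a else 0) := by
    intro i hi
    simp only [Finset.mem_Icc] at hi
    rw [Matrix.mul_smul]
    by_cases h1 : i = 1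
    · have hH : H N m i = ∑ l ∈ Finset.Icc 1 m, E N l l := by rw [H, if_pos h1]
      rw [hH, Finset.mul_sum, Finset.sum_eq_zero (fun l hl => ?_), smul_zero,
        if_neg (by omega), if_neg (by omega), add_zero]
      simp only [Finset.mem_Icc] at hl
      rw [E_mul_E N k a l l ha1' ha2', if_neg (by omega)]
    · by_cases h2 : i ≤ m
      · have hH : H N m i = E N i 1 := by rw [H, if_neg h1, if_pos h2]
        rw [hH, E_mul_E N k a i 1 ha1' ha2', if_neg (by omega), smul_zero,
          if_neg (by omega), if_neg (by omega), add_zero]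
      · by_cases h3 : i ≤ N - 1
        · have hH : H N m i = E N i N := by rw [H, if_neg h1, if_neg h2, if_pos h3]
          rw [hH, E_mul_E N k a i N ha1' ha2', if_neg (show ¬N = i by omega), add_zero]
          by_cases h4 : a = i
          · rw [if_pos h4, if_pos h4]
          · rw [if_neg h4, if_neg h4, smul_zero]
        · have hiN : i = N := by omega
          have hH : H N m i = ∑ l ∈ Finset.Icc (m + 1) N, E N l l := by
            rw [H, if_neg h1, if_neg h2, if_neg h3]
          have hprod : ∀ l ∈ Finset.Icc (m + 1) N, E N k a * E N l l
              = if a = l then E N k l else 0 :=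
            fun l _ => E_mul_E N k a l l ha1' ha2'
          rw [hH, Finset.mul_sum, Finset.sum_congr rfl hprod, Finset.sum_ite_eq,
            if_pos (Finset.mem_Icc.mpr ⟨ha1, ha2'⟩), if_neg (by omega),
            if_pos hiN.symm, hiN, zero_add]
  rw [Finset.sum_congr rfl key, Finset.sum_add_distrib, Finset.sum_ite_eq, Finset.sum_ite_eq,
    if_pos (Finset.mem_Icc.mpr ⟨ha1', ha2'⟩), if_pos (Finset.mem_Icc.mpr ⟨by omega, le_refl N⟩)]

lemma right_N (hN : 4 ≤ N) (hm1 : 2 ≤ m) (hm2 : m ≤ N - 2)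
    (hk1 : 2 ≤ k) (hk2 : k ≤ m) :
    E N k N * (∑ i ∈ Finset.Icc 1 N, x i • H N m i) = x N • E N k N := by
  have hN1 : 1 ≤ N := by omega
  rw [Finset.mul_sum]
  have key : ∀ i ∈ Finset.Icc 1 N, E N k N * (x i • H N m i)
      = (if N = i then x i • E N k N else 0) := by
    intro i hi
    simp only [Finset.mem_Icc] at hi
    rw [Matrix.mul_smul]
    by_cases h1 : i = 1
    · have hH : H N m i = ∑ l ∈ Finset.Icc 1 m, E N l l := by rw [H, if_pos h1]
      rw [hH, Finset.mul_sum, Finset.sum_eq_zero (fun l hl => ?_), smul_zero,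
        if_neg (by omega)]
      simp only [Finset.mem_Icc] at hl
      rw [E_mul_E N k N l l hN1 (le_refl N), if_neg (by omega)]
    · by_cases h2 : i ≤ m
      · have hH : H N m i = E N i 1 := by rw [H, if_neg h1, if_pos h2]
        rw [hH, E_mul_E N k N i 1 hN1 (le_refl N), if_neg (by omega), smul_zero,
          if_neg (by omega)]
      · by_cases h3 : i ≤ N - 1
        · have hH : H N m i = E N i N := by rw [H, if_neg h1, if_neg h2, if_pos h3]
          rw [hH, E_mul_E N k N i N hN1 (le_refl N), if_neg (by omega), smul_zero,
            if_neg (by omega)]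
        · have hiN : i = N := by omega
          have hH : H N m i = ∑ l ∈ Finset.Icc (m + 1) N, E N l l := by
            rw [H, if_neg h1, if_neg h2, if_neg h3]
          have hprod : ∀ l ∈ Finset.Icc (m + 1) N, E N k N * E N l l
              = if N = l then E N k l else 0 :=
            fun l _ => E_mul_E N k N l l hN1 (le_refl N)
          rw [hH, Finset.mul_sum, Finset.sum_congr rfl hprod, Finset.sum_ite_eq,
            if_pos (Finset.mem_Icc.mpr ⟨by omega, le_refl N⟩), if_pos hiN.symm]
  rw [Finset.sum_congr rfl key, Finset.sum_ite_eq,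
    if_pos (Finset.mem_Icc.mpr ⟨hN1, le_refl N⟩)]

lemma left_any (b : ℕ) (hN : 4 ≤ N) (hm1 : 2 ≤ m) (hm2 : m ≤ N - 2)
    (hk1 : 2 ≤ k) (hk2 : k ≤ m) :
    (∑ i ∈ Finset.Icc 1 N, x i • H N m i) * E N k b = x 1 • E N k b := by
  rw [Finset.sum_mul]
  have key : ∀ i ∈ Finset.Icc 1 N, (x i • H N m i) * E N k b
      = (if i = 1 then x i • E N k b else 0) := by
    intro i hi
    simp only [Finset.mem_Icc] at hi
    rw [Matrix.smul_mul]
    by_cases h1 : i = 1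
    · have hH : H N m i = ∑ l ∈ Finset.Icc 1 m, E N l l := by rw [H, if_pos h1]
      have hprod : ∀ l ∈ Finset.Icc 1 m, E N l l * E N k b
          = if l = k then E N l b else 0 := by
        intro l hl
        simp only [Finset.mem_Icc] at hl
        exact E_mul_E N l l k b hl.1 (by omega)
      rw [hH, Finset.sum_mul, Finset.sum_congr rfl hprod, Finset.sum_ite_eq',
        if_pos (Finset.mem_Icc.mpr ⟨by omega, hk2⟩), if_pos h1]
    · rw [if_neg h1]
      by_cases h2 : i ≤ m
      · have hH : H N m i = E N i 1 := by rw [H, if_neg h1, if_pos h2]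
        rw [hH, E_mul_E N i 1 k b (le_refl 1) (by omega), if_neg (by omega), smul_zero]
      · by_cases h3 : i ≤ N - 1
        · have hH : H N m i = E N i N := by rw [H, if_neg h1, if_neg h2, if_pos h3]
          rw [hH, E_mul_E N i N k b (by omega) (le_refl N), if_neg (by omega), smul_zero]
        · have hH : H N m i = ∑ l ∈ Finset.Icc (m + 1) N, E N l l := by
            rw [H, if_neg h1, if_neg h2, if_neg h3]
          rw [hH, Finset.sum_mul, Finset.sum_eq_zero (fun l hl => ?_), smul_zero]
          simp only [Finset.mem_Icc] at hl
          rw [E_mul_E N l l k b (by omega) (by omega), if_neg (by omega)]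
  rw [Finset.sum_congr rfl key, Finset.sum_ite_eq',
    if_pos (Finset.mem_Icc.mpr ⟨le_refl 1, by omega⟩)]

end Identities

end AdjointAux

theorem adjoint_Eka (N m : ℕ) (hN : 4 ≤ N) (hm1 : 2 ≤ m) (hm2 : m ≤ N - 2)
    (x : ℕ → ℝ) (k a : ℕ) (hk1 : 2 ≤ k) (hk2 : k ≤ m) (ha1 : m + 1 ≤ a) (ha2 : a ≤ N - 1) :
    (NormedSpace.exp (∑ i ∈ Finset.Icc 1 N, x i • H N m i))⁻¹ * E N k a *
        NormedSpace.exp (∑ i ∈ Finset.Icc 1 N, x i • H N m i) =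
      Real.exp (x N - x 1) • (E N k a + x a • E N k N) := by
  set X := ∑ i ∈ Finset.Icc 1 N, x i • H N m i with hX
  have h1' : E N k a * X = x N • E N k a + x a • E N k N := by
    rw [hX, AdjointAux.right_a N m k a x hN hm1 hm2 hk1 hk2 ha1 ha2, add_comm]
  have h2' : (x a • E N k N) * X = x N • (x a • E N k N) := by
    rw [Matrix.smul_mul, hX, AdjointAux.right_N N m k x hN hm1 hm2 hk1 hk2,
      smul_smul, smul_smul, mul_comm]
  have hE_exp : E N k a * NormedSpace.exp X
      = Real.exp (x N) • (E N k a + x a • E N k N) := by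
    rw [AdjointAux.exp_jordan_right X (E N k a) (x a • E N k N) (x N) h1' h2', smul_add]
  have hleft : (-X) * (E N k a + x a • E N k N)
      = (-(x 1)) • (E N k a + x a • E N k N) := by
    have la := AdjointAux.left_any N m k x a hN hm1 hm2 hk1 hk2
    have lN := AdjointAux.left_any N m k x N hN hm1 hm2 hk1 hk2
    rw [Matrix.neg_mul, Matrix.mul_add, Matrix.mul_smul, ← hX] at *
    rw [la, lN]
    module
  have hfin := AdjointAux.exp_eigen_left (-X) (E N k a + x a • E N k N) (-(x 1)) hleft
  rw [← Matrix.exp_neg X, mul_assoc, hE_exp, Matrix.mul_smul, hfin, smul_smul,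
    ← Real.exp_add]
  ring_nf
end

section
/- For real λ, ħ > 0, and x ∈ ℝ, define F(x) = ∫_{-∞}^{∞} exp(iλt - ħ^{-1}(e^{-t} + e^{t-x})) dt. Then F is twice differentiable and satisfies the Gr_{1,2}-Toda (modified Bessel) equation ħ² F''(x) - iλħ² F'(x) - e^{-x} F(x) = 0. -/
open MeasureTheory Complex

lemma exp_ge_quarter_sq (t : ℝ) (ht : 0 ≤ t) : t ^ 2 / 4 ≤ Real.exp t := by
  have h1 : t / 2 + 1 ≤ Real.exp (t / 2) := Real.add_one_le_exp (t/2)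
  have h2 : Real.exp t = Real.exp (t/2) * Real.exp (t/2) := by
    rw [← Real.exp_add]; ring_nf
  nlinarith [Real.exp_nonneg (t/2)]

/-- master integrability lemma -/
lemma integrable_master (a b k : ℝ) (ha : 0 < a) (hb : 0 < b) :
    Integrable (fun t : ℝ => Real.exp (k * t - (a * Real.exp (-t) + b * Real.exp t))) := by
  set m : ℝ := min (a/8) (b/8) with hm
  have hm0 : 0 < m := lt_min (by linarith) (by linarith)
  clear_value m
  set C : ℝ := 2 * k ^ 2 / b + 2 * k ^ 2 / a with hC
  clear_value C
  have hCb : 2 * k ^ 2 / b * b = 2 * k ^ 2 := div_mul_cancel₀ _ hb.ne'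
  have hCa : 2 * k ^ 2 / a * a = 2 * k ^ 2 := div_mul_cancel₀ _ ha.ne'
  have hCb0 : 0 ≤ 2 * k ^ 2 / b := by positivity
  have hCa0 : 0 ≤ 2 * k ^ 2 / a := by positivity
  have key : ∀ t : ℝ, k * t - (a * Real.exp (-t) + b * Real.exp t) ≤ C - m * t ^ 2 := by
    intro t
    have hma : m ≤ a / 8 := hm ▸ min_le_left _ _
    have hmb : m ≤ b / 8 := hm ▸ min_le_right _ _
    set E1 := Real.exp (-t) with hE1
    set E2 := Real.exp t with hE2
    rcases le_or_gt 0 t with h | h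
    · have e1 : t ^ 2 / 4 ≤ Real.exp t := exp_ge_quarter_sq t h
      have e2 : 0 ≤ Real.exp (-t) := Real.exp_nonneg _
      have e3 : k * t ≤ b * t ^ 2 / 8 + 2 * k ^ 2 / b := by
        nlinarith [sq_nonneg (b * t / 4 - k), hCb, hb]
      have e4 : m * t ^ 2 ≤ b / 8 * t ^ 2 := mul_le_mul_of_nonneg_right hmb (sq_nonneg t)
      have e5 : b * (t ^ 2 / 4) ≤ b * E2 := by
        rw [hE2]; exact mul_le_mul_of_nonneg_left e1 hb.le
      have e6 : 0 ≤ a * E1 := mul_nonneg ha.le e2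
      clear_value E1 E2
      linarith
    · have e1 : (-t) ^ 2 / 4 ≤ Real.exp (-t) := exp_ge_quarter_sq (-t) (by linarith)
      have e2 : 0 ≤ Real.exp t := Real.exp_nonneg _
      have e3 : k * t ≤ a * t ^ 2 / 8 + 2 * k ^ 2 / a := by
        nlinarith [sq_nonneg (a * t / 4 - k), hCa, ha]
      have e4 : m * t ^ 2 ≤ a / 8 * t ^ 2 := mul_le_mul_of_nonneg_right hma (sq_nonneg t)
      have e5 : a * ((-t) ^ 2 / 4) ≤ a * E1 := by
        rw [hE1]; exact mul_le_mul_of_nonneg_left e1 ha.le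
      have e6 : 0 ≤ b * E2 := mul_nonneg hb.le e2
      clear_value E1 E2
      nlinarith
  refine Integrable.mono' ((integrable_exp_neg_mul_sq hm0).const_mul (Real.exp C)) ?_ ?_
  · apply Continuous.aestronglyMeasurable; continuity
  · filter_upwards with t
    rw [Real.norm_eq_abs, _root_.abs_of_nonneg (Real.exp_nonneg _), ← Real.exp_add]
    exact Real.exp_le_exp.2 (by have := key t; linarith)

/-- The stationary phase integral representation of the `Gr_{1,2}`-Whittaker function. -/
noncomputable def F (lam hbar : ℝ) (x : ℝ) : ℂ :=
  ∫ t : ℝ, Complex.exp (Complex.I * (lam : ℂ) * (t : ℂ)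
    - (hbar⁻¹ : ℂ) * (Complex.exp (-(t : ℂ)) + Complex.exp ((t : ℂ) - (x : ℂ))))

noncomputable def g (lam hbar x t : ℝ) : ℂ :=
  Complex.exp (Complex.I * (lam : ℂ) * (t : ℂ)
    - (hbar⁻¹ : ℂ) * (Complex.exp (-(t : ℂ)) + Complex.exp ((t : ℂ) - (x : ℂ))))

lemma cexp_neg_ofReal (t : ℝ) : Complex.exp (-(t : ℂ)) = ((Real.exp (-t) : ℝ) : ℂ) := by
  rw [Complex.ofReal_exp]; norm_cast

lemma cexp_sub_ofReal (t x : ℝ) :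
    Complex.exp ((t : ℂ) - (x : ℂ)) = ((Real.exp (t - x) : ℝ) : ℂ) := by
  rw [Complex.ofReal_exp]; norm_cast

lemma norm_g (lam hbar x t : ℝ) :
    ‖g lam hbar x t‖ = Real.exp (-(hbar⁻¹ * (Real.exp (-t) + Real.exp (t - x)))) := by
  unfold g
  rw [Complex.norm_exp]
  congr 1
  simp only [show ((hbar:ℂ))⁻¹ = ((hbar⁻¹ : ℝ) : ℂ) by push_cast; ring,
    Complex.sub_re, Complex.mul_re, Complex.mul_im, Complex.add_re, Complex.add_im,
    Complex.I_re, Complex.I_im, Complex.ofReal_re, Complex.ofReal_im,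
    show (-(t:ℂ)) = (((-t : ℝ)) : ℂ) by push_cast; ring,
    show ((t:ℂ) - (x:ℂ)) = (((t - x : ℝ)) : ℂ) by push_cast; ring,
    Complex.exp_ofReal_re, Complex.exp_ofReal_im]
  ring

lemma continuous_g (lam hbar x : ℝ) : Continuous (fun t => g lam hbar x t) := by
  unfold g; fun_prop

/-- integrability of `exp(k(t-x)) • g` -/
lemma integrable_G (lam hbar x : ℝ) (hh : 0 < hbar) (k : ℝ) :
    Integrable (fun t : ℝ => (Real.exp (k * (t - x)) : ℂ) * g lam hbar x t) := by
  have hb : (0:ℝ) < hbar⁻¹ * Real.exp (-x) := by positivity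
  refine Integrable.mono' (((integrable_master hbar⁻¹ (hbar⁻¹ * Real.exp (-x)) k
    (by positivity) hb).const_mul (Real.exp (-(k * x))))) ?_ ?_
  · apply Continuous.aestronglyMeasurable
    exact (Complex.continuous_ofReal.comp (by continuity)).mul (continuous_g lam hbar x)
  · filter_upwards with t
    rw [norm_mul, norm_g, Complex.norm_real, Real.norm_eq_abs,
      _root_.abs_of_nonneg (Real.exp_nonneg _), ← Real.exp_add, ← Real.exp_add]
    apply Real.exp_le_exp.2
    apply le_of_eq
    have h1 : Real.exp (t - x) = Real.exp (-x) * Real.exp t := by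
      rw [← Real.exp_add]; ring_nf
    rw [h1]; ring

lemma hasDerivAt_ofReal (x : ℝ) : HasDerivAt (fun x : ℝ => (x:ℂ)) 1 x := by
  exact Complex.ofRealCLM.hasDerivAt

/-- derivative of the inner phase in `x` -/
lemma hasDerivAt_g_x (lam hbar t x : ℝ) :
    HasDerivAt (fun x : ℝ => g lam hbar x t)
      (((hbar⁻¹ * Real.exp (t - x) : ℝ) : ℂ) * g lam hbar x t) x := by
  have h1 : HasDerivAt (fun x : ℝ => (t:ℂ) - (x:ℂ)) (-1) x := by
    exact (hasDerivAt_ofReal x).const_sub (t:ℂ)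
  have h2 := h1.cexp
  have h3 : HasDerivAt (fun x : ℝ => Complex.I * (lam:ℂ) * (t:ℂ)
      - (hbar⁻¹:ℂ) * (Complex.exp (-(t:ℂ)) + Complex.exp ((t:ℂ)-(x:ℂ))))
      (0 - (hbar⁻¹:ℂ) * (0 + Complex.exp ((t:ℂ)-(x:ℂ)) * (-1))) x :=
    (hasDerivAt_const _ _).sub (((hasDerivAt_const _ _).add h2).const_mul _)
  have h4 := h3.cexp
  refine h4.congr_deriv (Eq.symm ?_)
  show _ = g lam hbar x t * _
  rw [cexp_sub_ofReal]
  push_cast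
  ring

/-- derivative of `g` in `t` -/
lemma hasDerivAt_g_t (lam hbar x t : ℝ) :
    HasDerivAt (fun t : ℝ => g lam hbar x t)
      ((Complex.I * (lam:ℂ) + ((hbar⁻¹ * Real.exp (-t) : ℝ) : ℂ)
        - ((hbar⁻¹ * Real.exp (t - x) : ℝ) : ℂ)) * g lam hbar x t) t := by
  have h0 : HasDerivAt (fun t : ℝ => -(t:ℂ)) (-1) t := (hasDerivAt_ofReal t).neg
  have h1 : HasDerivAt (fun t : ℝ => (t:ℂ) - (x:ℂ)) 1 t := by
    exact (hasDerivAt_ofReal t).sub_const (x:ℂ)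
  have h3 : HasDerivAt (fun t : ℝ => Complex.I * (lam:ℂ) * (t:ℂ)
      - (hbar⁻¹:ℂ) * (Complex.exp (-(t:ℂ)) + Complex.exp ((t:ℂ)-(x:ℂ))))
      (Complex.I * (lam:ℂ) * 1
        - (hbar⁻¹:ℂ) * (Complex.exp (-(t:ℂ)) * (-1) + Complex.exp ((t:ℂ)-(x:ℂ)) * 1)) t :=
    (((hasDerivAt_ofReal t).const_mul _)).sub ((h0.cexp.add h1.cexp).const_mul _)
  have h4 := h3.cexp
  refine h4.congr_deriv (Eq.symm ?_)
  show _ = g lam hbar x t * _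
  rw [cexp_sub_ofReal, cexp_neg_ofReal]
  push_cast
  ring

/-- derivative in `x` of the first-derivative integrand -/
lemma hasDerivAt_G1_x (lam hbar t x : ℝ) :
    HasDerivAt (fun x : ℝ => ((hbar⁻¹ * Real.exp (t - x) : ℝ) : ℂ) * g lam hbar x t)
      (((hbar⁻¹ ^ 2 * Real.exp (2 * (t - x)) - hbar⁻¹ * Real.exp (t - x) : ℝ) : ℂ)
        * g lam hbar x t) x := by
  have hr : HasDerivAt (fun x : ℝ => hbar⁻¹ * Real.exp (t - x))
      (-(hbar⁻¹ * Real.exp (t - x))) x := by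
    have h1 : HasDerivAt (fun x : ℝ => t - x) (-1) x := by
      exact (hasDerivAt_id x).const_sub t
    have := (h1.exp).const_mul hbar⁻¹
    exact this.congr_deriv (by ring)
  have hc := hr.ofReal_comp
  have := hc.mul (hasDerivAt_g_x lam hbar t x)
  refine this.congr_deriv (Eq.symm ?_)
  have h2 : Real.exp (2 * (t - x)) = Real.exp (t - x) * Real.exp (t - x) := by
    rw [← Real.exp_add]; ring_nf
  push_cast [h2]
  ring

lemma integrable_g (lam hbar x : ℝ) (hh : 0 < hbar) :
    Integrable (fun t : ℝ => g lam hbar x t) := by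
  have := integrable_G lam hbar x hh 0
  simpa using this

lemma key_bound (hbar x₀ x t k : ℝ) (hh : 0 < hbar) (hx : |x - x₀| < 1) (hk : 0 ≤ k) :
    Real.exp (k * (t - x)) * Real.exp (-(hbar⁻¹ * (Real.exp (-t) + Real.exp (t - x))))
      ≤ Real.exp (k * (1 - x₀)) * Real.exp (k * t
          - (hbar⁻¹ * Real.exp (-t) + hbar⁻¹ * Real.exp (-(x₀ + 1)) * Real.exp t)) := by
  obtain ⟨hl, hr⟩ := abs_lt.1 hx
  rw [← Real.exp_add, ← Real.exp_add]
  apply Real.exp_le_exp.2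
  have h1 : Real.exp (-(x₀ + 1)) ≤ Real.exp (-x) := Real.exp_le_exp.2 (by linarith)
  have h2 : hbar⁻¹ * Real.exp (-(x₀ + 1)) * Real.exp t
      ≤ hbar⁻¹ * (Real.exp (-x) * Real.exp t) := by
    rw [mul_assoc]
    apply mul_le_mul_of_nonneg_left _ (by positivity)
    exact mul_le_mul_of_nonneg_right h1 (Real.exp_nonneg t)
  have h3 : Real.exp (-x) * Real.exp t = Real.exp (t - x) := by
    rw [← Real.exp_add]; ring_nf
  rw [h3] at h2
  have h4 : k * (t - x) ≤ k * (t + 1 - x₀) :=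
    mul_le_mul_of_nonneg_left (by linarith) hk
  nlinarith [Real.exp_nonneg (-t), inv_nonneg.2 hh.le]

lemma hasDerivAt_F_aux (lam hbar : ℝ) (hh : 0 < hbar) (x₀ : ℝ) :
    Integrable (fun t : ℝ => ((hbar⁻¹ * Real.exp (t - x₀) : ℝ) : ℂ) * g lam hbar x₀ t)
    ∧ HasDerivAt (F lam hbar)
      (∫ t : ℝ, ((hbar⁻¹ * Real.exp (t - x₀) : ℝ) : ℂ) * g lam hbar x₀ t) x₀ := by
  have ha : (0:ℝ) < hbar⁻¹ := by positivity
  have hb : (0:ℝ) < hbar⁻¹ * Real.exp (-(x₀ + 1)) := by positivity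
  have key := hasDerivAt_integral_of_dominated_loc_of_deriv_le (μ := volume)
    (F := fun (x : ℝ) (t : ℝ) => g lam hbar x t)
    (F' := fun (x : ℝ) (t : ℝ) => ((hbar⁻¹ * Real.exp (t - x) : ℝ) : ℂ) * g lam hbar x t)
    (x₀ := x₀)
    (bound := fun t => hbar⁻¹ * (Real.exp (1 * (1 - x₀)) * Real.exp (1 * t
      - (hbar⁻¹ * Real.exp (-t) + hbar⁻¹ * Real.exp (-(x₀ + 1)) * Real.exp t))))
    (Metric.ball_mem_nhds x₀ zero_lt_one)
    (Filter.Eventually.of_forall fun x => (continuous_g lam hbar x).aestronglyMeasurable)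
    (integrable_g lam hbar x₀ hh)
    (Continuous.aestronglyMeasurable (by
      exact (Complex.continuous_ofReal.comp (by continuity)).mul (continuous_g lam hbar x₀)))
    (Filter.Eventually.of_forall fun t => by
      intro x hx
      have hx1 : |x - x₀| < 1 := by simpa [Real.dist_eq] using hx
      rw [norm_mul, Complex.norm_real, Real.norm_eq_abs, norm_g,
        _root_.abs_of_nonneg (by positivity)]
      calc hbar⁻¹ * Real.exp (t - x) * Real.exp (-(hbar⁻¹ * (Real.exp (-t) + Real.exp (t - x))))
          = hbar⁻¹ * (Real.exp (1 * (t - x))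
            * Real.exp (-(hbar⁻¹ * (Real.exp (-t) + Real.exp (t - x))))) := by
            rw [one_mul]; ring
        _ ≤ _ := mul_le_mul_of_nonneg_left
            (key_bound hbar x₀ x t 1 hh hx1 zero_le_one) ha.le)
    (((integrable_master hbar⁻¹ (hbar⁻¹ * Real.exp (-(x₀ + 1))) 1 ha hb).const_mul
        (Real.exp (1 * (1 - x₀)))).const_mul hbar⁻¹)
    (Filter.Eventually.of_forall fun t => fun x _ => hasDerivAt_g_x lam hbar t x)
  exact key

lemma hasDerivAt_F'_aux (lam hbar : ℝ) (hh : 0 < hbar) (x₀ : ℝ) :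
    Integrable (fun t : ℝ => ((hbar⁻¹ ^ 2 * Real.exp (2 * (t - x₀))
        - hbar⁻¹ * Real.exp (t - x₀) : ℝ) : ℂ) * g lam hbar x₀ t)
    ∧ HasDerivAt (fun x : ℝ => ∫ t : ℝ, ((hbar⁻¹ * Real.exp (t - x) : ℝ) : ℂ) * g lam hbar x t)
      (∫ t : ℝ, ((hbar⁻¹ ^ 2 * Real.exp (2 * (t - x₀))
        - hbar⁻¹ * Real.exp (t - x₀) : ℝ) : ℂ) * g lam hbar x₀ t) x₀ := by
  have ha : (0:ℝ) < hbar⁻¹ := by positivity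
  have hb : (0:ℝ) < hbar⁻¹ * Real.exp (-(x₀ + 1)) := by positivity
  have key := hasDerivAt_integral_of_dominated_loc_of_deriv_le (μ := volume)
    (F := fun (x : ℝ) (t : ℝ) => ((hbar⁻¹ * Real.exp (t - x) : ℝ) : ℂ) * g lam hbar x t)
    (F' := fun (x : ℝ) (t : ℝ) => ((hbar⁻¹ ^ 2 * Real.exp (2 * (t - x))
        - hbar⁻¹ * Real.exp (t - x) : ℝ) : ℂ) * g lam hbar x t)
    (x₀ := x₀)
    (bound := fun t =>
      hbar⁻¹ ^ 2 * (Real.exp (2 * (1 - x₀)) * Real.exp (2 * t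
        - (hbar⁻¹ * Real.exp (-t) + hbar⁻¹ * Real.exp (-(x₀ + 1)) * Real.exp t)))
      + hbar⁻¹ * (Real.exp (1 * (1 - x₀)) * Real.exp (1 * t
        - (hbar⁻¹ * Real.exp (-t) + hbar⁻¹ * Real.exp (-(x₀ + 1)) * Real.exp t))))
    (Metric.ball_mem_nhds x₀ zero_lt_one)
    (Filter.Eventually.of_forall fun x => Continuous.aestronglyMeasurable (by
      exact (Complex.continuous_ofReal.comp (by continuity)).mul (continuous_g lam hbar x)))
    (hasDerivAt_F_aux lam hbar hh x₀).1
    (Continuous.aestronglyMeasurable (by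
      exact (Complex.continuous_ofReal.comp (by continuity)).mul (continuous_g lam hbar x₀)))
    (Filter.Eventually.of_forall fun t => by
      intro x hx
      have hx1 : |x - x₀| < 1 := by simpa [Real.dist_eq] using hx
      rw [norm_mul, Complex.norm_real, Real.norm_eq_abs, norm_g]
      have h1 := key_bound hbar x₀ x t 1 hh hx1 zero_le_one
      have h2 := key_bound hbar x₀ x t 2 hh hx1 (by norm_num)
      have habs : |hbar⁻¹ ^ 2 * Real.exp (2 * (t - x)) - hbar⁻¹ * Real.exp (t - x)|
          ≤ hbar⁻¹ ^ 2 * Real.exp (2 * (t - x)) + hbar⁻¹ * Real.exp (t - x) := by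
        refine (abs_sub _ _).trans ?_
        rw [_root_.abs_of_nonneg (by positivity), _root_.abs_of_nonneg (by positivity)]
      have hN : (0:ℝ) ≤ Real.exp (-(hbar⁻¹ * (Real.exp (-t) + Real.exp (t - x)))) :=
        Real.exp_nonneg _
      calc |hbar⁻¹ ^ 2 * Real.exp (2 * (t - x)) - hbar⁻¹ * Real.exp (t - x)|
            * Real.exp (-(hbar⁻¹ * (Real.exp (-t) + Real.exp (t - x))))
          ≤ (hbar⁻¹ ^ 2 * Real.exp (2 * (t - x)) + hbar⁻¹ * Real.exp (t - x))
            * Real.exp (-(hbar⁻¹ * (Real.exp (-t) + Real.exp (t - x)))) :=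
            mul_le_mul_of_nonneg_right habs hN
        _ = hbar⁻¹ ^ 2 * (Real.exp (2 * (t - x))
              * Real.exp (-(hbar⁻¹ * (Real.exp (-t) + Real.exp (t - x)))))
            + hbar⁻¹ * (Real.exp (1 * (t - x))
              * Real.exp (-(hbar⁻¹ * (Real.exp (-t) + Real.exp (t - x))))) := by
            rw [one_mul]; ring
        _ ≤ _ := add_le_add
            (mul_le_mul_of_nonneg_left h2 (by positivity))
            (mul_le_mul_of_nonneg_left h1 ha.le))
    ((((integrable_master hbar⁻¹ (hbar⁻¹ * Real.exp (-(x₀ + 1))) 2 ha hb).const_mul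
        (Real.exp (2 * (1 - x₀)))).const_mul (hbar⁻¹ ^ 2)).add
      (((integrable_master hbar⁻¹ (hbar⁻¹ * Real.exp (-(x₀ + 1))) 1 ha hb).const_mul
        (Real.exp (1 * (1 - x₀)))).const_mul hbar⁻¹))
    (Filter.Eventually.of_forall fun t => fun x _ => hasDerivAt_G1_x lam hbar t x)
  exact key

lemma parts_eq (lam hbar x : ℝ) (hh : 0 < hbar) :
    (1 + Complex.I * (lam:ℂ)) * (∫ t : ℝ, ((Real.exp (1 * (t - x)) : ℝ) : ℂ) * g lam hbar x t)
      + ((hbar⁻¹ * Real.exp (-x) : ℝ) : ℂ) * (∫ t : ℝ, g lam hbar x t)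
      - (hbar⁻¹ : ℂ) * (∫ t : ℝ, ((Real.exp (2 * (t - x)) : ℝ) : ℂ) * g lam hbar x t) = 0 := by
  have ha : (0:ℝ) < hbar⁻¹ := by positivity
  set φ : ℝ → ℂ := fun t => ((Real.exp (t - x) : ℝ) : ℂ) * g lam hbar x t with hφ
  set ψ : ℝ → ℂ := fun t =>
      (1 + Complex.I * (lam:ℂ)) * (((Real.exp (1 * (t - x)) : ℝ) : ℂ) * g lam hbar x t)
      + ((hbar⁻¹ * Real.exp (-x) : ℝ) : ℂ) * g lam hbar x t
      - (hbar⁻¹ : ℂ) * (((Real.exp (2 * (t - x)) : ℝ) : ℂ) * g lam hbar x t) with hψ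
  have hderiv : ∀ t : ℝ, HasDerivAt φ (ψ t) t := by
    intro t
    have h1 : HasDerivAt (fun t : ℝ => t - x) 1 t := by
      simpa using (hasDerivAt_id t).sub_const x
    have hr : HasDerivAt (fun t : ℝ => Real.exp (t - x)) (Real.exp (t - x)) t := by
      simpa using h1.exp
    have h2 := hr.ofReal_comp.mul (hasDerivAt_g_t lam hbar x t)
    refine h2.congr_deriv (Eq.symm ?_)
    have e2 : Real.exp (2 * (t - x)) = Real.exp (t - x) * Real.exp (t - x) := by
      rw [← Real.exp_add]; ring_nf
    have e0 : Real.exp (-x) = Real.exp (-t) * Real.exp (t - x) := by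
      rw [← Real.exp_add]; ring_nf
    rw [hψ]
    show (1 + Complex.I * (lam:ℂ)) * (((Real.exp (1 * (t - x)) : ℝ) : ℂ) * g lam hbar x t)
      + ((hbar⁻¹ * Real.exp (-x) : ℝ) : ℂ) * g lam hbar x t
      - (hbar⁻¹ : ℂ) * (((Real.exp (2 * (t - x)) : ℝ) : ℂ) * g lam hbar x t) = _
    rw [one_mul, e2, e0]
    push_cast
    ring
  have i1 : Integrable (fun t : ℝ => (1 + Complex.I * (lam:ℂ))
      * (((Real.exp (1 * (t - x)) : ℝ) : ℂ) * g lam hbar x t)) :=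
    (integrable_G lam hbar x hh 1).const_mul _
  have i0 : Integrable (fun t : ℝ => ((hbar⁻¹ * Real.exp (-x) : ℝ) : ℂ) * g lam hbar x t) :=
    (integrable_g lam hbar x hh).const_mul _
  have i2 : Integrable (fun t : ℝ => (hbar⁻¹ : ℂ)
      * (((Real.exp (2 * (t - x)) : ℝ) : ℂ) * g lam hbar x t)) :=
    (integrable_G lam hbar x hh 2).const_mul _
  have i10 : Integrable (fun t : ℝ => (1 + Complex.I * (lam:ℂ))
      * (((Real.exp (1 * (t - x)) : ℝ) : ℂ) * g lam hbar x t)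
      + ((hbar⁻¹ * Real.exp (-x) : ℝ) : ℂ) * g lam hbar x t) := i1.add i0
  have hint : Integrable ψ := by rw [hψ]; exact i10.sub i2
  have hnorm : ∀ t : ℝ, ‖φ t‖
      = Real.exp (t - x) * Real.exp (-(hbar⁻¹ * (Real.exp (-t) + Real.exp (t - x)))) := by
    intro t
    rw [hφ]
    show ‖((Real.exp (t - x) : ℝ) : ℂ) * g lam hbar x t‖ = _
    rw [norm_mul, Complex.norm_real, Real.norm_eq_abs, norm_g,
      _root_.abs_of_nonneg (Real.exp_nonneg _)]
  have hbot : Filter.Tendsto φ Filter.atBot (nhds 0) := by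
    rw [tendsto_zero_iff_norm_tendsto_zero]
    apply squeeze_zero (fun t => norm_nonneg _) (g := fun t => Real.exp (t - x))
    · intro t
      rw [hnorm t]
      have h1 : Real.exp (-(hbar⁻¹ * (Real.exp (-t) + Real.exp (t - x)))) ≤ 1 := by
        have : Real.exp (-(hbar⁻¹ * (Real.exp (-t) + Real.exp (t - x)))) ≤ Real.exp 0 :=
          Real.exp_le_exp.2 (neg_nonpos.2 (by positivity))
        simpa using this
      calc Real.exp (t - x) * Real.exp (-(hbar⁻¹ * (Real.exp (-t) + Real.exp (t - x))))
          ≤ Real.exp (t - x) * 1 := mul_le_mul_of_nonneg_left h1 (Real.exp_nonneg _)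
        _ = Real.exp (t - x) := mul_one _
    · have h := Real.tendsto_exp_atBot.comp
        (Filter.tendsto_atBot_add_const_right Filter.atBot (-x) Filter.tendsto_id)
      exact h.congr fun t => by simp [Function.comp, sub_eq_add_neg]
  have htop : Filter.Tendsto φ Filter.atTop (nhds 0) := by
    rw [tendsto_zero_iff_norm_tendsto_zero]
    apply squeeze_zero (fun t => norm_nonneg _)
      (g := fun t => Real.exp (t - x) * Real.exp (-(hbar⁻¹ * Real.exp (t - x))))
    · intro t
      rw [hnorm t]
      apply mul_le_mul_of_nonneg_left _ (Real.exp_nonneg _)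
      apply Real.exp_le_exp.2
      have := mul_nonneg ha.le (Real.exp_nonneg (-t))
      nlinarith [Real.exp_nonneg (t - x), Real.exp_nonneg (-t)]
    · have T1 : Filter.Tendsto (fun s : ℝ => s * Real.exp (-s)) Filter.atTop (nhds 0) := by
        simpa using Real.tendsto_pow_mul_exp_neg_atTop_nhds_zero 1
      have T2 : Filter.Tendsto (fun u : ℝ => hbar⁻¹ * u) Filter.atTop Filter.atTop :=
        Filter.Tendsto.const_mul_atTop ha Filter.tendsto_id
      have T3 := (T1.comp T2).const_mul (hbar : ℝ)
      have T4 : Filter.Tendsto (fun u : ℝ => u * Real.exp (-(hbar⁻¹ * u)))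
          Filter.atTop (nhds 0) := by
        have heq : (fun u : ℝ => u * Real.exp (-(hbar⁻¹ * u)))
            = fun u : ℝ => hbar * ((fun s : ℝ => s * Real.exp (-s)) ((fun u : ℝ => hbar⁻¹ * u) u)) := by
          funext u
          simp only [Function.comp]
          rw [show hbar * (hbar⁻¹ * u * Real.exp (-(hbar⁻¹ * u)))
            = (hbar * hbar⁻¹) * (u * Real.exp (-(hbar⁻¹ * u))) by ring,
            mul_inv_cancel₀ hh.ne', one_mul]
        rw [heq]
        simpa using T3
      have E : Filter.Tendsto (fun t : ℝ => Real.exp (t - x)) Filter.atTop Filter.atTop := by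
        have h := Real.tendsto_exp_atTop.comp
          (Filter.tendsto_atTop_add_const_right Filter.atTop (-x) Filter.tendsto_id)
        exact h.congr fun t => by simp [Function.comp, sub_eq_add_neg]
      have := T4.comp E
      exact this
  have h0 : (∫ t : ℝ, ψ t) = 0 - 0 :=
    MeasureTheory.integral_of_hasDerivAt_of_tendsto hderiv hint hbot htop
  rw [hψ] at h0
  rw [MeasureTheory.integral_sub i10 i2, MeasureTheory.integral_add i1 i0,
    MeasureTheory.integral_const_mul, MeasureTheory.integral_const_mul,
    MeasureTheory.integral_const_mul] at h0
  rw [show (0:ℂ) - 0 = 0 by ring] at h0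
  exact h0

theorem Gr12_Toda_equation (lam hbar : ℝ) (hh : 0 < hbar) :
    (∀ x : ℝ, DifferentiableAt ℝ (F lam hbar) x) ∧
    (∀ x : ℝ, DifferentiableAt ℝ (deriv (F lam hbar)) x) ∧
    (∀ x : ℝ, (hbar : ℂ) ^ 2 * deriv (deriv (F lam hbar)) x
        - Complex.I * (lam : ℂ) * (hbar : ℂ) ^ 2 * deriv (F lam hbar) x
        - Complex.exp (-(x : ℂ)) * F lam hbar x = 0) := by
  have hD1 : ∀ x : ℝ, HasDerivAt (F lam hbar)
      (∫ t : ℝ, ((hbar⁻¹ * Real.exp (t - x) : ℝ) : ℂ) * g lam hbar x t) x :=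
    fun x => (hasDerivAt_F_aux lam hbar hh x).2
  have hderivF : deriv (F lam hbar)
      = fun x => ∫ t : ℝ, ((hbar⁻¹ * Real.exp (t - x) : ℝ) : ℂ) * g lam hbar x t :=
    funext fun x => (hD1 x).deriv
  have hD2 : ∀ x : ℝ, HasDerivAt (deriv (F lam hbar))
      (∫ t : ℝ, ((hbar⁻¹ ^ 2 * Real.exp (2 * (t - x))
        - hbar⁻¹ * Real.exp (t - x) : ℝ) : ℂ) * g lam hbar x t) x := by
    intro x
    rw [hderivF]
    exact (hasDerivAt_F'_aux lam hbar hh x).2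
  refine ⟨fun x => (hD1 x).differentiableAt, fun x => (hD2 x).differentiableAt, fun x => ?_⟩
  have hbc : (hbar : ℂ) ≠ 0 := by exact_mod_cast hh.ne'
  have ha1 : (hbar : ℂ) * (hbar : ℂ)⁻¹ = 1 := mul_inv_cancel₀ hbc
  have hd1 : deriv (F lam hbar) x
      = ∫ t : ℝ, ((hbar⁻¹ * Real.exp (t - x) : ℝ) : ℂ) * g lam hbar x t := (hD1 x).deriv
  have hd2 : deriv (deriv (F lam hbar)) x
      = ∫ t : ℝ, ((hbar⁻¹ ^ 2 * Real.exp (2 * (t - x))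
        - hbar⁻¹ * Real.exp (t - x) : ℝ) : ℂ) * g lam hbar x t := (hD2 x).deriv
  have e1 : (∫ t : ℝ, ((hbar⁻¹ * Real.exp (t - x) : ℝ) : ℂ) * g lam hbar x t)
      = (hbar⁻¹ : ℂ) * ∫ t : ℝ, ((Real.exp (1 * (t - x)) : ℝ) : ℂ) * g lam hbar x t := by
    rw [← MeasureTheory.integral_const_mul]
    congr 1; funext t; rw [one_mul]; push_cast; ring
  have e2 : (∫ t : ℝ, ((hbar⁻¹ ^ 2 * Real.exp (2 * (t - x))
        - hbar⁻¹ * Real.exp (t - x) : ℝ) : ℂ) * g lam hbar x t)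
      = (hbar⁻¹ : ℂ) ^ 2 * (∫ t : ℝ, ((Real.exp (2 * (t - x)) : ℝ) : ℂ) * g lam hbar x t)
        - (hbar⁻¹ : ℂ) * ∫ t : ℝ, ((Real.exp (1 * (t - x)) : ℝ) : ℂ) * g lam hbar x t := by
    rw [← MeasureTheory.integral_const_mul, ← MeasureTheory.integral_const_mul,
      ← MeasureTheory.integral_sub ((integrable_G lam hbar x hh 2).const_mul _)
        ((integrable_G lam hbar x hh 1).const_mul _)]
    congr 1; funext t; rw [one_mul]; push_cast; ring
  have hFx : F lam hbar x = ∫ t : ℝ, g lam hbar x t := rfl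
  have hparts := parts_eq lam hbar x hh
  rw [show ((hbar⁻¹ * Real.exp (-x) : ℝ) : ℂ) = (hbar⁻¹ : ℂ) * Complex.exp (-(x : ℂ)) by
    rw [cexp_neg_ofReal]; push_cast; ring] at hparts
  rw [hd2, hd1, e1, e2, hFx]
  set A0 := ∫ t : ℝ, g lam hbar x t with hA0
  set A1 := ∫ t : ℝ, ((Real.exp (1 * (t - x)) : ℝ) : ℂ) * g lam hbar x t with hA1
  set A2 := ∫ t : ℝ, ((Real.exp (2 * (t - x)) : ℝ) : ℂ) * g lam hbar x t with hA2
  linear_combination (-(hbar : ℂ)) * hparts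
    + ((hbar : ℂ) * (hbar : ℂ)⁻¹ * A2 + Complex.exp (-(x : ℂ)) * A0
      - (hbar : ℂ) * (1 + Complex.I * (lam : ℂ)) * A1) * ha1
end
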